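/- arXiv:2111.00838 — 2 statements merged into one kernel-verified Lean document; each statement's English description precedes it below -/
import Mathlib

section
/- Let (𝔥,∇) be a finite-dimensional flat Lie superalgebra over 𝕂 and let α : 𝔥 × 𝔥 → 𝔥* be an even, super anti-symmetric bilinear map that is a 2-cocycle for the dual representation ρ. Let 𝔤 = 𝔥 ⊕ 𝔥* with bracket [u,v]_𝔤 = [u,v]_𝔥 + α(u,v), [u,ξ]_𝔤 = ρ(u)·ξ, [ξ,ζ]_𝔤 = 0 (u,v ∈ 𝔥, ξ,ζ ∈ 𝔥*), and let ω be the even form ω(u+ξ, v+ζ) = ξ(v) − (−1)^{p(ζ)p(u)}ζ(u). Then ω is closed on 𝔤 if and only if (−1)^{p(u)p(w)}α(u,v)(w) + (−1)^{p(w)p(v)}α(w,u)(v) + (−1)^{p(v)p(u)}α(v,w)(u) = 0 for all homogeneous u,v,w ∈ 𝔥. -/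
noncomputable section

/-- The sign `(−1)^{ij}` for parities `i, j` encoded as booleans
(`false` = even, `true` = odd). -/
def ssign (K : Type*) [Field K] (i j : Bool) : K := if i && j then -1 else 1

section Defs

variable (K : Type*) [Field K]

/-- A map `f : V → V → W` is bilinear over `K`. -/
def IsBilinMap (V W : Type*) [AddCommGroup V] [Module K V] [AddCommGroup W] [Module K W]
    (f : V → V → W) : Prop :=
  (∀ x y z : V, f (x + y) z = f x z + f y z) ∧
  (∀ (c : K) (x y : V), f (c • x) y = c • f x y) ∧
  (∀ x y z : V, f x (y + z) = f x y + f x z) ∧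
  (∀ (c : K) (x y : V), f x (c • y) = c • f x y)

variable (V : Type*) [AddCommGroup V] [Module K V]

/-- A Lie superalgebra structure over `K` on the `ℤ/2`-graded space `V`,
with homogeneous components `sub false` (even part) and `sub true` (odd part),
and bracket `br`.  Includes super anti-commutativity, the super Jacobi identity,
and (when `char K = 3`) the extra cubic condition on odd elements. -/
structure IsLieSuperAlg (sub : Bool → Submodule K V) (br : V → V → V) : Prop where
  compl : IsCompl (sub false) (sub true)
  bilin : IsBilinMap K V V br
  graded : ∀ i j : Bool, ∀ x ∈ sub i, ∀ y ∈ sub j, br x y ∈ sub (Bool.xor i j)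
  antisymm : ∀ i j : Bool, ∀ x ∈ sub i, ∀ y ∈ sub j, br y x = -(ssign K i j • br x y)
  jacobi : ∀ i j k : Bool, ∀ x ∈ sub i, ∀ y ∈ sub j, ∀ z ∈ sub k,
    ssign K i k • br x (br y z) + ssign K j i • br y (br z x) + ssign K k j • br z (br x y) = 0
  jacobi3 : ringChar K = 3 → ∀ f ∈ sub true, br f (br f f) = 0

/-- Graded anti-symmetry of a bilinear form: `ω(y,x) = -(-1)^{p(x)p(y)} ω(x,y)`. -/
def IsSuperSkew (sub : Bool → Submodule K V) (ω : V → V → K) : Prop :=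
  ∀ i j : Bool, ∀ x ∈ sub i, ∀ y ∈ sub j, ω y x = -(ssign K i j * ω x y)

/-- Closedness (2-cocycle condition) of a bilinear form with respect to a bracket. -/
def IsClosedForm (sub : Bool → Submodule K V) (br : V → V → V) (ω : V → V → K) : Prop :=
  ∀ i j k : Bool, ∀ x ∈ sub i, ∀ y ∈ sub j, ∀ z ∈ sub k,
    ssign K i k * ω x (br y z) + ssign K k j * ω z (br x y) + ssign K j i * ω y (br z x) = 0

/-- Non-degeneracy of a bilinear form. -/
def IsNondegForm (ω : V → V → K) : Prop := ∀ x : V, (∀ y : V, ω x y = 0) → x = 0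

/-- A bilinear form is even if it vanishes on pairs of homogeneous elements
of opposite parity. -/
def IsEvenForm (sub : Bool → Submodule K V) (ω : V → V → K) : Prop :=
  ∀ x y : V, (x ∈ sub false ∧ y ∈ sub true) ∨ (x ∈ sub true ∧ y ∈ sub false) → ω x y = 0

/-- A bilinear form is odd if it vanishes on pairs of homogeneous elements
of the same parity. -/
def IsOddForm (sub : Bool → Submodule K V) (ω : V → V → K) : Prop :=
  ∀ i : Bool, ∀ x ∈ sub i, ∀ y ∈ sub i, ω x y = 0

/-- `(𝔤, ω)` is quasi-Frobenius: `ω` is a closed anti-symmetric non-degenerate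
bilinear form. -/
def IsQuasiFrobenius (sub : Bool → Submodule K V) (br : V → V → V) (ω : V → V → K) : Prop :=
  IsBilinMap K V K ω ∧ IsSuperSkew K V sub ω ∧ IsClosedForm K V sub br ω ∧ IsNondegForm K V ω

end Defs

/-- The grading on the dual space: `(𝔥*)_i = {ξ | ξ(𝔥_{1−i}) = 0}`. -/
def dualSub (K H : Type*) [Field K] [AddCommGroup H] [Module K H]
    (sub : Bool → Submodule K H) (i : Bool) : Submodule K (Module.Dual K H) :=
  Submodule.dualAnnihilator (sub (!i))


section TexprAux

variable {K : Type*} [Field K] {V : Type*} [AddCommGroup V] [Module K V]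

/-- The trilinear expression whose vanishing is the closedness condition. -/
def Texpr (K : Type*) [Field K] {V : Type*} [AddCommGroup V] [Module K V]
    (br : V → V → V) (ω : V → V → K) (i j k : Bool) (x y z : V) : K :=
  ssign K i k * ω x (br y z) + ssign K k j * ω z (br x y) + ssign K j i * ω y (br z x)

lemma Texpr_add_left (br : V → V → V) (ω : V → V → K)
    (hbr : IsBilinMap K V V br) (hω : IsBilinMap K V K ω) (i j k : Bool) (x x' y z : V) :
    Texpr K br ω i j k (x + x') y z
      = Texpr K br ω i j k x y z + Texpr K br ω i j k x' y z := by
  unfold Texpr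
  simp only [hω.1, hω.2.2.1, hbr.1, hbr.2.2.1]
  ring

lemma Texpr_add_mid (br : V → V → V) (ω : V → V → K)
    (hbr : IsBilinMap K V V br) (hω : IsBilinMap K V K ω) (i j k : Bool) (x y y' z : V) :
    Texpr K br ω i j k x (y + y') z
      = Texpr K br ω i j k x y z + Texpr K br ω i j k x y' z := by
  unfold Texpr
  simp only [hω.1, hω.2.2.1, hbr.1, hbr.2.2.1]
  ring

lemma Texpr_add_right (br : V → V → V) (ω : V → V → K)
    (hbr : IsBilinMap K V V br) (hω : IsBilinMap K V K ω) (i j k : Bool) (x y z z' : V) :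
    Texpr K br ω i j k x y (z + z')
      = Texpr K br ω i j k x y z + Texpr K br ω i j k x y z' := by
  unfold Texpr
  simp only [hω.1, hω.2.2.1, hbr.1, hbr.2.2.1]
  ring

end TexprAux

/-- For a finite-dimensional flat Lie superalgebra `(𝔥, ∇)` and an
even super anti-symmetric 2-cocycle `α : 𝔥 × 𝔥 → 𝔥*` for the dual representation
`ρ(u)·ξ = −(−1)^{p(u)p(ξ)} ξ∘∇_u`, the even form
`ω(u+ξ, v+ζ) = ξ(v) − (−1)^{p(ζ)p(u)} ζ(u)` on the `T*`-extension `𝔤 = 𝔥 ⊕ 𝔥*` is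
closed if and only if `(−1)^{p(u)p(w)} α(u,v)(w) + ↻(u,v,w) = 0` for all homogeneous
`u, v, w ∈ 𝔥`. -/
theorem tstar_closed_iff_cyclic
    (K H : Type*) [Field K] [AddCommGroup H] [Module K H] [FiniteDimensional K H]
    (hchar : ringChar K ≠ 2)
    (sub : Bool → Submodule K H) (br : H → H → H)
    (hLie : IsLieSuperAlg K H sub br)
    -- the torsion-free flat connection ∇
    (conn : H →ₗ[K] H →ₗ[K] H)
    (hgr : ∀ i j : Bool, ∀ u ∈ sub i, ∀ v ∈ sub j, conn u v ∈ sub (Bool.xor i j))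
    (hTF : ∀ i j : Bool, ∀ u ∈ sub i, ∀ v ∈ sub j,
      conn u v - ssign K i j • conn v u = br u v)
    (hFlat : ∀ i j : Bool, ∀ u ∈ sub i, ∀ v ∈ sub j, ∀ w : H,
      conn u (conn v w) - ssign K i j • conn v (conn u w) = conn (br u v) w)
    -- the even super anti-symmetric 2-cocycle α with values in 𝔥*
    (α : H → H → Module.Dual K H)
    (hαbil : IsBilinMap K H (Module.Dual K H) α)
    (hαeven : ∀ i j : Bool, ∀ u ∈ sub i, ∀ v ∈ sub j,
      α u v ∈ dualSub K H sub (Bool.xor i j))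
    (hαskew : ∀ i j : Bool, ∀ u ∈ sub i, ∀ v ∈ sub j, α v u = -(ssign K i j • α u v))
    (hαcoc : ∀ i j k : Bool, ∀ u ∈ sub i, ∀ v ∈ sub j, ∀ w ∈ sub k,
      -(ssign K i (Bool.xor j k)) • ((α v w).comp (conn u))
        - ssign K i j • (-(ssign K j (Bool.xor i k)) • ((α u w).comp (conn v)))
        + (ssign K k i * ssign K k j) • (-(ssign K k (Bool.xor i j)) • ((α u v).comp (conn w)))
        - α (br u v) w + ssign K j k • α (br u w) v + α u (br v w) = 0)
    -- the bracket of the T*-extension 𝔤 = 𝔥 ⊕ 𝔥*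
    (brG : H × Module.Dual K H → H × Module.Dual K H → H × Module.Dual K H)
    (hbrGbil : IsBilinMap K (H × Module.Dual K H) (H × Module.Dual K H) brG)
    (hbrG1 : ∀ u v : H, brG (u, 0) (v, 0) = (br u v, α u v))
    (hbrG2 : ∀ i j : Bool, ∀ u ∈ sub i, ∀ ξ ∈ dualSub K H sub j,
      brG (u, 0) (0, ξ) = (0, -(ssign K i j) • (ξ.comp (conn u))))
    (hbrG3 : ∀ i j : Bool, ∀ u ∈ sub i, ∀ ξ ∈ dualSub K H sub j,
      brG (0, ξ) (u, 0) = (0, ξ.comp (conn u)))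
    (hbrG4 : ∀ ξ ζ : Module.Dual K H, brG (0, ξ) (0, ζ) = 0)
    -- the even form ω on 𝔤
    (ωG : H × Module.Dual K H → H × Module.Dual K H → K)
    (hωGbil : IsBilinMap K (H × Module.Dual K H) K ωG)
    (hωGval : ∀ i i' j j' : Bool, ∀ u ∈ sub i, ∀ ξ ∈ dualSub K H sub i',
      ∀ v ∈ sub j, ∀ ζ ∈ dualSub K H sub j',
      ωG (u, ξ) (v, ζ) = ξ v - ssign K j' i * ζ u) :
    IsClosedForm K (H × Module.Dual K H)
        (fun i => (sub i).prod (dualSub K H sub i)) brG ωG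
      ↔ (∀ i j k : Bool, ∀ u ∈ sub i, ∀ v ∈ sub j, ∀ w ∈ sub k,
          ssign K i k * α u v w + ssign K k j * α w u v + ssign K j i * α v w u = 0) := by
  classical
  -- zero lemmas for the bilinear maps
  have ωG0r : ∀ x, ωG x 0 = 0 := by
    intro x
    have h := hωGbil.2.2.2 0 x 0
    rw [zero_smul, zero_smul] at h
    exact h
  have hmem0 : ∀ i, (0 : H) ∈ sub i := fun i => Submodule.zero_mem _
  have dmem0 : ∀ i, (0 : Module.Dual K H) ∈ dualSub K H sub i :=
    fun i => Submodule.zero_mem _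
  -- evaluation of ω on the two basic shapes
  have ωE : ∀ (i j j' : Bool) (u v : H) (ζ : Module.Dual K H), u ∈ sub i → v ∈ sub j →
      ζ ∈ dualSub K H sub j' → ωG (u, 0) (v, ζ) = -(ssign K j' i * ζ u) := by
    intro i j j' u v ζ hu hv hζ
    rw [hωGval i false j j' u hu 0 (dmem0 false) v hv ζ hζ]
    simp
  have ωF : ∀ (i' j j' : Bool) (ξ : Module.Dual K H) (v : H) (ζ : Module.Dual K H),
      ξ ∈ dualSub K H sub i' → v ∈ sub j → ζ ∈ dualSub K H sub j' →
      ωG (0, ξ) (v, ζ) = ξ v := by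
    intro i' j j' ξ v ζ hξ hv hζ
    rw [hωGval false i' j j' 0 (hmem0 false) ξ hξ v hv ζ hζ]
    simp
  -- composing with the connection preserves the dual grading
  have hcomp : ∀ (i j : Bool) (ξ : Module.Dual K H) (v : H), ξ ∈ dualSub K H sub i →
      v ∈ sub j → ξ.comp (conn v) ∈ dualSub K H sub (Bool.xor i j) := by
    intro i j ξ v hξ hv
    rw [dualSub, Submodule.mem_dualAnnihilator] at hξ ⊢
    intro w hw
    have h1 : conn v w ∈ sub (Bool.xor j (!(Bool.xor i j))) := hgr j _ v hv w hw
    have h2 : (Bool.xor j (!(Bool.xor i j))) = !i := by cases i <;> cases j <;> rfl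
    rw [h2] at h1
    simpa using hξ _ h1
  -- the eight homogeneous cases
  have tHHH : ∀ (i j k : Bool) (u v w : H), u ∈ sub i → v ∈ sub j → w ∈ sub k →
      Texpr K brG ωG i j k (u, 0) (v, 0) (w, 0)
        = -(ssign K i k * α u v w + ssign K k j * α w u v + ssign K j i * α v w u) := by
    intro i j k u v w hu hv hw
    unfold Texpr
    rw [hbrG1 v w, hbrG1 u v, hbrG1 w u,
      ωE i (Bool.xor j k) (Bool.xor j k) u (br v w) (α v w) hu
        (hLie.graded j k v hv w hw) (hαeven j k v hv w hw),
      ωE k (Bool.xor i j) (Bool.xor i j) w (br u v) (α u v) hw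
        (hLie.graded i j u hu v hv) (hαeven i j u hu v hv),
      ωE j (Bool.xor k i) (Bool.xor k i) v (br w u) (α w u) hv
        (hLie.graded k i w hw u hu) (hαeven k i w hw u hu)]
    cases i <;> cases j <;> cases k <;> simp [ssign] <;> ring
  have tDHH : ∀ (i j k : Bool) (ξ : Module.Dual K H) (v w : H), ξ ∈ dualSub K H sub i →
      v ∈ sub j → w ∈ sub k → Texpr K brG ωG i j k (0, ξ) (v, 0) (w, 0) = 0 := by
    intro i j k ξ v w hξ hv hw
    unfold Texpr
    rw [hbrG1 v w, hbrG3 j i v hv ξ hξ, hbrG2 k i w hw ξ hξ,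
      ωF i (Bool.xor j k) (Bool.xor j k) ξ (br v w) (α v w) hξ
        (hLie.graded j k v hv w hw) (hαeven j k v hv w hw),
      ωE k false (Bool.xor i j) w 0 (ξ.comp (conn v)) hw (hmem0 false)
        (hcomp i j ξ v hξ hv),
      ωE j false (Bool.xor i k) v 0 (-(ssign K k i) • ξ.comp (conn w)) hv (hmem0 false)
        (Submodule.smul_mem _ _ (hcomp i k ξ w hξ hw)),
      ← hTF j k v hv w hw]
    simp only [map_sub, map_smul, smul_eq_mul, LinearMap.comp_apply, LinearMap.smul_apply]
    cases i <;> cases j <;> cases k <;> simp [ssign] <;> ring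
  have tHDH : ∀ (i j k : Bool) (u : H) (ξ : Module.Dual K H) (w : H), u ∈ sub i →
      ξ ∈ dualSub K H sub j → w ∈ sub k →
      Texpr K brG ωG i j k (u, 0) (0, ξ) (w, 0) = 0 := by
    intro i j k u ξ w hu hξ hw
    unfold Texpr
    rw [hbrG3 k j w hw ξ hξ, hbrG2 i j u hu ξ hξ, hbrG1 w u,
      ωE i false (Bool.xor j k) u 0 (ξ.comp (conn w)) hu (hmem0 false)
        (hcomp j k ξ w hξ hw),
      ωE k false (Bool.xor j i) w 0 (-(ssign K i j) • ξ.comp (conn u)) hw (hmem0 false)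
        (Submodule.smul_mem _ _ (hcomp j i ξ u hξ hu)),
      ωF j (Bool.xor k i) (Bool.xor k i) ξ (br w u) (α w u) hξ
        (hLie.graded k i w hw u hu) (hαeven k i w hw u hu),
      ← hTF k i w hw u hu]
    simp only [map_sub, map_smul, smul_eq_mul, LinearMap.comp_apply, LinearMap.smul_apply]
    cases i <;> cases j <;> cases k <;> simp [ssign] <;> ring
  have tHHD : ∀ (i j k : Bool) (u v : H) (ζ : Module.Dual K H), u ∈ sub i → v ∈ sub j →
      ζ ∈ dualSub K H sub k → Texpr K brG ωG i j k (u, 0) (v, 0) (0, ζ) = 0 := by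
    intro i j k u v ζ hu hv hζ
    unfold Texpr
    rw [hbrG2 j k v hv ζ hζ, hbrG1 u v, hbrG3 i k u hu ζ hζ,
      ωE i false (Bool.xor k j) u 0 (-(ssign K j k) • ζ.comp (conn v)) hu (hmem0 false)
        (Submodule.smul_mem _ _ (hcomp k j ζ v hζ hv)),
      ωF k (Bool.xor i j) (Bool.xor i j) ζ (br u v) (α u v) hζ
        (hLie.graded i j u hu v hv) (hαeven i j u hu v hv),
      ωE j false (Bool.xor k i) v 0 (ζ.comp (conn u)) hv (hmem0 false)
        (hcomp k i ζ u hζ hu),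
      ← hTF i j u hu v hv]
    simp only [map_sub, map_smul, smul_eq_mul, LinearMap.comp_apply, LinearMap.smul_apply]
    cases i <;> cases j <;> cases k <;> simp [ssign] <;> ring
  have tHDD : ∀ (i j k : Bool) (u : H) (ξ ζ : Module.Dual K H), u ∈ sub i →
      ξ ∈ dualSub K H sub j → ζ ∈ dualSub K H sub k →
      Texpr K brG ωG i j k (u, 0) (0, ξ) (0, ζ) = 0 := by
    intro i j k u ξ ζ hu hξ hζ
    unfold Texpr
    rw [hbrG4 ξ ζ, hbrG2 i j u hu ξ hξ, hbrG3 i k u hu ζ hζ, ωG0r,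
      ωF k false (Bool.xor j i) ζ 0 (-(ssign K i j) • ξ.comp (conn u)) hζ (hmem0 false)
        (Submodule.smul_mem _ _ (hcomp j i ξ u hξ hu)),
      ωF j false (Bool.xor k i) ξ 0 (ζ.comp (conn u)) hξ (hmem0 false)
        (hcomp k i ζ u hζ hu)]
    simp
  have tDHD : ∀ (i j k : Bool) (ξ : Module.Dual K H) (v : H) (ζ : Module.Dual K H),
      ξ ∈ dualSub K H sub i → v ∈ sub j → ζ ∈ dualSub K H sub k →
      Texpr K brG ωG i j k (0, ξ) (v, 0) (0, ζ) = 0 := by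
    intro i j k ξ v ζ hξ hv hζ
    unfold Texpr
    rw [hbrG2 j k v hv ζ hζ, hbrG3 j i v hv ξ hξ, hbrG4 ζ ξ, ωG0r,
      ωF i false (Bool.xor k j) ξ 0 (-(ssign K j k) • ζ.comp (conn v)) hξ (hmem0 false)
        (Submodule.smul_mem _ _ (hcomp k j ζ v hζ hv)),
      ωF k false (Bool.xor i j) ζ 0 (ξ.comp (conn v)) hζ (hmem0 false)
        (hcomp i j ξ v hξ hv)]
    simp
  have tDDH : ∀ (i j k : Bool) (ξ ζ : Module.Dual K H) (w : H),
      ξ ∈ dualSub K H sub i → ζ ∈ dualSub K H sub j → w ∈ sub k →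
      Texpr K brG ωG i j k (0, ξ) (0, ζ) (w, 0) = 0 := by
    intro i j k ξ ζ w hξ hζ hw
    unfold Texpr
    rw [hbrG3 k j w hw ζ hζ, hbrG4 ξ ζ, hbrG2 k i w hw ξ hξ, ωG0r,
      ωF i false (Bool.xor j k) ξ 0 (ζ.comp (conn w)) hξ (hmem0 false)
        (hcomp j k ζ w hζ hw),
      ωF j false (Bool.xor i k) ζ 0 (-(ssign K k i) • ξ.comp (conn w)) hζ (hmem0 false)
        (Submodule.smul_mem _ _ (hcomp i k ξ w hξ hw))]
    simp
  have tDDD : ∀ (i j k : Bool) (ξ ζ η : Module.Dual K H),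
      Texpr K brG ωG i j k (0, ξ) (0, ζ) (0, η) = 0 := by
    intro i j k ξ ζ η
    unfold Texpr
    rw [hbrG4 ζ η, hbrG4 ξ ζ, hbrG4 η ξ, ωG0r, ωG0r, ωG0r]
    simp
  -- the general homogeneous computation
  have key : ∀ (i j k : Bool) (u : H) (ξ : Module.Dual K H) (v : H) (ζ : Module.Dual K H)
      (w : H) (η : Module.Dual K H), u ∈ sub i → ξ ∈ dualSub K H sub i → v ∈ sub j →
      ζ ∈ dualSub K H sub j → w ∈ sub k → η ∈ dualSub K H sub k →
      Texpr K brG ωG i j k (u, ξ) (v, ζ) (w, η)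
        = -(ssign K i k * α u v w + ssign K k j * α w u v + ssign K j i * α v w u) := by
    intro i j k u ξ v ζ w η hu hξ hv hζ hw hη
    have e1 : ((u, ξ) : H × Module.Dual K H) = (u, 0) + (0, ξ) := by simp
    have e2 : ((v, ζ) : H × Module.Dual K H) = (v, 0) + (0, ζ) := by simp
    have e3 : ((w, η) : H × Module.Dual K H) = (w, 0) + (0, η) := by simp
    rw [e1, e2, e3]
    simp only [Texpr_add_left brG ωG hbrGbil hωGbil,
      Texpr_add_mid brG ωG hbrGbil hωGbil, Texpr_add_right brG ωG hbrGbil hωGbil]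
    rw [tHHH i j k u v w hu hv hw, tDHH i j k ξ v w hξ hv hw,
      tHDH i j k u ζ w hu hζ hw, tHHD i j k u v η hu hv hη,
      tHDD i j k u ζ η hu hζ hη, tDHD i j k ξ v η hξ hv hη,
      tDDH i j k ξ ζ w hξ hζ hw, tDDD i j k ξ ζ η]
    ring
  constructor
  · intro hcl i j k u hu v hv w hw
    have h : Texpr K brG ωG i j k (u, 0) (v, 0) (w, 0) = 0 :=
      hcl i j k (u, 0) (Submodule.mem_prod.mpr ⟨hu, dmem0 i⟩)
        (v, 0) (Submodule.mem_prod.mpr ⟨hv, dmem0 j⟩)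
        (w, 0) (Submodule.mem_prod.mpr ⟨hw, dmem0 k⟩)
    rw [tHHH i j k u v w hu hv hw] at h
    exact neg_eq_zero.mp h
  · intro hcyc i j k x hx y hy z hz
    obtain ⟨hx1, hx2⟩ := Submodule.mem_prod.mp hx
    obtain ⟨hy1, hy2⟩ := Submodule.mem_prod.mp hy
    obtain ⟨hz1, hz2⟩ := Submodule.mem_prod.mp hz
    have h : Texpr K brG ωG i j k x y z
        = -(ssign K i k * α x.1 y.1 z.1 + ssign K k j * α z.1 x.1 y.1
            + ssign K j i * α y.1 z.1 x.1) :=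
      key i j k x.1 x.2 y.1 y.2 z.1 z.2 hx1 hx2 hy1 hy2 hz1 hz2
    show Texpr K brG ωG i j k x y z = 0
    rw [h, hcyc i j k x.1 hx1 y.1 hy1 z.1 hz1, neg_zero]
end
end

section
/- Let (𝔥,∇) be a finite-dimensional flat Lie superalgebra over 𝕂 and let α : 𝔥 × 𝔥 → 𝔥* be an even, super anti-symmetric 2-cocycle for the dual representation ρ that satisfies the cyclic condition (−1)^{p(u)p(w)}α(u,v)(w) + (−1)^{p(w)p(v)}α(w,u)(v) + (−1)^{p(v)p(u)}α(v,w)(u) = 0 for all homogeneous u,v,w ∈ 𝔥. Then 𝔤 = 𝔥 ⊕ 𝔥* with bracket [u,v]_𝔤 = [u,v]_𝔥 + α(u,v), [u,ξ]_𝔤 = ρ(u)·ξ, [ξ,ζ]_𝔤 = 0 is a Lie superalgebra; the even form ω(u+ξ, v+ζ) = ξ(v) − (−1)^{p(ζ)p(u)}ζ(u) is closed, anti-symmetric and non-degenerate, so (𝔤,ω) is an orthosymplectic quasi-Frobenius Lie superalgebra; moreover 𝔥* is a Lagrangian ideal of (𝔤,ω) and 𝔥 is a complementary Lagrangian subalgebra,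 i.e. (𝔤,ω) is strongly polarized by (𝔥*,𝔥). -/
noncomputable section

section Helpers

variable {K H V W : Type*} [Field K] [AddCommGroup V] [Module K V] [AddCommGroup W] [Module K W]

lemma bilin_zero_left {f : V → V → W} (h : IsBilinMap K V W f) (y : V) : f 0 y = 0 := by
  have := h.2.1 0 0 y; simpa using this

lemma bilin_zero_right {f : V → V → W} (h : IsBilinMap K V W f) (x : V) : f x 0 = 0 := by
  have := h.2.2.2 0 x 0; simpa using this

lemma bilin_neg_right {f : V → V → W} (h : IsBilinMap K V W f) (x y : V) : f x (-y) = - f x y := by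
  have := h.2.2.2 (-1) x y; simpa using this

lemma bilin_neg_left {f : V → V → W} (h : IsBilinMap K V W f) (x y : V) : f (-x) y = - f x y := by
  have := h.2.1 (-1) x y; simpa using this

lemma bilin_neg_smul_right {f : V → V → W} (h : IsBilinMap K V W f) (c : K) (x y : V) :
    f x (-(c • y)) = -(c • f x y) := by
  rw [bilin_neg_right h, h.2.2.2]

variable [AddCommGroup H] [Module K H]

lemma mem_dualSub {sub : Bool → Submodule K H} {i : Bool} {ξ : Module.Dual K H} :
    ξ ∈ dualSub K H sub i ↔ ∀ x ∈ sub (!i), ξ x = 0 := Submodule.mem_dualAnnihilator ξ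

lemma comp_mem_dualSub {sub : Bool → Submodule K H} {conn : H →ₗ[K] H →ₗ[K] H}
    (hgr : ∀ i j : Bool, ∀ u ∈ sub i, ∀ v ∈ sub j, conn u v ∈ sub (Bool.xor i j))
    {i j : Bool} {u : H} (hu : u ∈ sub i) {ξ : Module.Dual K H} (hξ : ξ ∈ dualSub K H sub j) :
    ξ.comp (conn u) ∈ dualSub K H sub (Bool.xor i j) := by
  rw [mem_dualSub]
  intro x hx
  have h1 : conn u x ∈ sub (Bool.xor i (!(Bool.xor i j))) := hgr _ _ u hu x hx
  have h2 : Bool.xor i (!(Bool.xor i j)) = !j := by cases i <;> cases j <;> rfl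
  rw [h2] at h1
  exact mem_dualSub.mp hξ _ h1

lemma decomp_of_isCompl {p q : Submodule K H} (h : IsCompl p q) (x : H) :
    ∃ a ∈ p, ∃ b ∈ q, x = a + b := by
  have : x ∈ p ⊔ q := by rw [h.sup_eq_top]; trivial
  obtain ⟨a, ha, b, hb, rfl⟩ := Submodule.mem_sup.mp this
  exact ⟨a, ha, b, hb, rfl⟩

lemma dualSub_isCompl {sub : Bool → Submodule K H} (h : IsCompl (sub false) (sub true)) :
    IsCompl (dualSub K H sub false) (dualSub K H sub true) :=
  Subspace.isCompl_dualAnnihilator h.symm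

end Helpers

@[simp] lemma ssign_false_left {K : Type*} [Field K] (j : Bool) : ssign K false j = 1 := rfl
@[simp] lemma ssign_false_right {K : Type*} [Field K] (i : Bool) : ssign K i false = 1 := by
  cases i <;> rfl
@[simp] lemma ssign_true_true {K : Type*} [Field K] : ssign K true true = -1 := rfl


section Main


variable {K H : Type*} [Field K] [AddCommGroup H] [Module K H]
variable {sub : Bool → Submodule K H} {br : H → H → H}
variable {conn : H →ₗ[K] H →ₗ[K] H}
variable {α : H → H → Module.Dual K H}
variable {brG : H × Module.Dual K H → H × Module.Dual K H → H × Module.Dual K H}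

/-- Pure H-H-H case of the super Jacobi identity for the T*-extension bracket. -/
lemma jacHHH
    (hbrbil : IsBilinMap K H H br)
    (hgrbr : ∀ i j : Bool, ∀ x ∈ sub i, ∀ y ∈ sub j, br x y ∈ sub (Bool.xor i j))
    (hbranti : ∀ i j : Bool, ∀ x ∈ sub i, ∀ y ∈ sub j, br y x = -(ssign K i j • br x y))
    (hjac : ∀ i j k : Bool, ∀ x ∈ sub i, ∀ y ∈ sub j, ∀ z ∈ sub k,
      ssign K i k • br x (br y z) + ssign K j i • br y (br z x) + ssign K k j • br z (br x y) = 0)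
    (hαbil : IsBilinMap K H (Module.Dual K H) α)
    (hαeven : ∀ i j : Bool, ∀ u ∈ sub i, ∀ v ∈ sub j,
      α u v ∈ dualSub K H sub (Bool.xor i j))
    (hαskew : ∀ i j : Bool, ∀ u ∈ sub i, ∀ v ∈ sub j, α v u = -(ssign K i j • α u v))
    (hαcoc : ∀ i j k : Bool, ∀ u ∈ sub i, ∀ v ∈ sub j, ∀ w ∈ sub k,
      -(ssign K i (Bool.xor j k)) • ((α v w).comp (conn u))
        - ssign K i j • (-(ssign K j (Bool.xor i k)) • ((α u w).comp (conn v)))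
        + (ssign K k i * ssign K k j) • (-(ssign K k (Bool.xor i j)) • ((α u v).comp (conn w)))
        - α (br u v) w + ssign K j k • α (br u w) v + α u (br v w) = 0)
    (hbrGbil : IsBilinMap K (H × Module.Dual K H) (H × Module.Dual K H) brG)
    (hbrG1 : ∀ u v : H, brG (u, 0) (v, 0) = (br u v, α u v))
    (hbrG2 : ∀ i j : Bool, ∀ u ∈ sub i, ∀ ξ ∈ dualSub K H sub j,
      brG (u, 0) (0, ξ) = (0, -(ssign K i j) • (ξ.comp (conn u))))
    (i j k : Bool) (u : H) (hu : u ∈ sub i) (v : H) (hv : v ∈ sub j) (w : H) (hw : w ∈ sub k) :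
    ssign K i k • brG (u, 0) (brG (v, 0) (w, 0)) + ssign K j i • brG (v, 0) (brG (w, 0) (u, 0))
      + ssign K k j • brG (w, 0) (brG (u, 0) (v, 0)) = 0 := by
  have split : ∀ (a : H) (φ : Module.Dual K H),
      ((a, φ) : H × Module.Dual K H) = (a, 0) + (0, φ) := by
    intro a φ; simp
  rw [hbrG1 v w, hbrG1 w u, hbrG1 u v,
    split (br v w) (α v w), split (br w u) (α w u), split (br u v) (α u v),
    hbrGbil.2.2.1, hbrGbil.2.2.1, hbrGbil.2.2.1,
    hbrG1 u (br v w), hbrG1 v (br w u), hbrG1 w (br u v),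
    hbrG2 i (Bool.xor j k) u hu _ (hαeven j k v hv w hw),
    hbrG2 j (Bool.xor k i) v hv _ (hαeven k i w hw u hu),
    hbrG2 k (Bool.xor i j) w hw _ (hαeven i j u hu v hv)]
  rw [Prod.ext_iff]
  constructor
  · simpa using hjac i j k u hu v hv w hw
  · show ssign K i k • (α u (br v w) + -(ssign K i (j.xor k)) • (α v w).comp (conn u))
      + ssign K j i • (α v (br w u) + -(ssign K j (k.xor i)) • (α w u).comp (conn v))
      + ssign K k j • (α w (br u v) + -(ssign K k (i.xor j)) • (α u v).comp (conn w)) = 0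
    rw [hbranti i k u hu w hw, bilin_neg_smul_right hαbil,
      hαskew (Bool.xor i k) j (br u w) (hgrbr i k u hu w hw) v hv,
      hαskew (Bool.xor i j) k (br u v) (hgrbr i j u hu v hv) w hw,
      hαskew i k u hu w hw]
    have hc := hαcoc i j k u hu v hv w hw
    simp only [LinearMap.neg_comp, LinearMap.smul_comp] at *
    cases i <;> cases j <;> cases k <;>
      simp only [ssign_false_left, ssign_false_right, ssign_true_true, Bool.xor_self,
        Bool.xor_false, Bool.false_xor, Bool.xor_true, Bool.true_xor, Bool.not_true,
        Bool.not_false] at hc ⊢ <;>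
      first
        | linear_combination (norm := module) hc
        | linear_combination (norm := module) -hc


/-- Pure H-H-Dual case of the super Jacobi identity. -/
lemma jacHHD
    (hgr : ∀ i j : Bool, ∀ u ∈ sub i, ∀ v ∈ sub j, conn u v ∈ sub (Bool.xor i j))
    (hgrbr : ∀ i j : Bool, ∀ x ∈ sub i, ∀ y ∈ sub j, br x y ∈ sub (Bool.xor i j))
    (hFlat : ∀ i j : Bool, ∀ u ∈ sub i, ∀ v ∈ sub j, ∀ w : H,
      conn u (conn v w) - ssign K i j • conn v (conn u w) = conn (br u v) w)
    (hαeven : ∀ i j : Bool, ∀ u ∈ sub i, ∀ v ∈ sub j,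
      α u v ∈ dualSub K H sub (Bool.xor i j))
    (hbrGbil : IsBilinMap K (H × Module.Dual K H) (H × Module.Dual K H) brG)
    (hbrG1 : ∀ u v : H, brG (u, 0) (v, 0) = (br u v, α u v))
    (hbrG2 : ∀ i j : Bool, ∀ u ∈ sub i, ∀ ξ ∈ dualSub K H sub j,
      brG (u, 0) (0, ξ) = (0, -(ssign K i j) • (ξ.comp (conn u))))
    (hbrG3 : ∀ i j : Bool, ∀ u ∈ sub i, ∀ ξ ∈ dualSub K H sub j,
      brG (0, ξ) (u, 0) = (0, ξ.comp (conn u)))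
    (hbrG4 : ∀ ξ ζ : Module.Dual K H, brG (0, ξ) (0, ζ) = 0)
    (i j k : Bool) (u : H) (hu : u ∈ sub i) (v : H) (hv : v ∈ sub j)
    (η : Module.Dual K H) (hη : η ∈ dualSub K H sub k) :
    ssign K i k • brG (u, 0) (brG (v, 0) (0, η)) + ssign K j i • brG (v, 0) (brG (0, η) (u, 0))
      + ssign K k j • brG (0, η) (brG (u, 0) (v, 0)) = 0 := by
  have esm : ∀ (d : K) (φ : Module.Dual K H),
      ((0 : H), d • φ) = d • (((0 : H), φ) : H × Module.Dual K H) := by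
    intro d φ; simp
  have split : ∀ (a : H) (φ : Module.Dual K H),
      ((a, φ) : H × Module.Dual K H) = (a, 0) + (0, φ) := by
    intro a φ; simp
  rw [hbrG2 j k v hv η hη, hbrG3 i k u hu η hη, hbrG1 u v,
    esm, hbrGbil.2.2.2, hbrG2 i (Bool.xor j k) u hu _ (comp_mem_dualSub hgr hv hη),
    hbrG2 j (Bool.xor i k) v hv _ (comp_mem_dualSub hgr hu hη),
    split (br u v) (α u v), hbrGbil.2.2.1,
    hbrG3 (Bool.xor i j) k (br u v) (hgrbr i j u hu v hv) η hη, hbrG4]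
  simp only [Prod.smul_mk, Prod.mk_add_mk, smul_zero, add_zero, zero_add, Prod.mk_eq_zero]
  refine ⟨trivial, ?_⟩
  refine LinearMap.ext fun m => ?_
  have hf := congrArg η (hFlat i j u hu v hv m)
  simp only [map_sub, map_smul, smul_eq_mul] at hf
  simp only [LinearMap.add_apply, LinearMap.smul_apply, LinearMap.comp_apply, LinearMap.neg_apply,
    LinearMap.zero_apply, smul_eq_mul]
  cases i <;> cases j <;> cases k <;>
    simp only [ssign_false_left, ssign_false_right, ssign_true_true, Bool.xor_self,
      Bool.xor_false, Bool.false_xor, Bool.xor_true, Bool.true_xor, Bool.not_true,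
      Bool.not_false] at hf ⊢ <;>
    first
      | linear_combination hf
      | linear_combination -hf

/-- The Jacobi expression. -/
def Jex {K G : Type*} [Field K] [AddCommGroup G] [Module K G] (brG : G → G → G)
    (i j k : Bool) (x y z : G) : G :=
  ssign K i k • brG x (brG y z) + ssign K j i • brG y (brG z x) + ssign K k j • brG z (brG x y)

lemma jacCyc {K G : Type*} [Field K] [AddCommGroup G] [Module K G] (brG : G → G → G)
    (i j k : Bool) (x y z : G) :
    Jex (K := K) brG i j k x y z = Jex (K := K) brG k i j z x y := by
  unfold Jex; abel

lemma jacExpand {K G : Type*} [Field K] [AddCommGroup G] [Module K G] {brG : G → G → G}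
    (hb : IsBilinMap K G G brG) (i j k : Bool) (x1 x2 y1 y2 z1 z2 : G) :
    Jex (K := K) brG i j k (x1 + x2) (y1 + y2) (z1 + z2) =
      Jex (K := K) brG i j k x1 y1 z1 + Jex (K := K) brG i j k x1 y1 z2
      + Jex (K := K) brG i j k x1 y2 z1 + Jex (K := K) brG i j k x1 y2 z2
      + Jex (K := K) brG i j k x2 y1 z1 + Jex (K := K) brG i j k x2 y1 z2
      + Jex (K := K) brG i j k x2 y2 z1 + Jex (K := K) brG i j k x2 y2 z2 := by
  unfold Jex
  simp only [hb.1, hb.2.2.1, smul_add]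
  abel

/-- Cases with at least two dual entries are trivially zero. -/
lemma jacHDD
    (hbrGbil : IsBilinMap K (H × Module.Dual K H) (H × Module.Dual K H) brG)
    (hbrG2 : ∀ i j : Bool, ∀ u ∈ sub i, ∀ ξ ∈ dualSub K H sub j,
      brG (u, 0) (0, ξ) = (0, -(ssign K i j) • (ξ.comp (conn u))))
    (hbrG3 : ∀ i j : Bool, ∀ u ∈ sub i, ∀ ξ ∈ dualSub K H sub j,
      brG (0, ξ) (u, 0) = (0, ξ.comp (conn u)))
    (hbrG4 : ∀ ξ ζ : Module.Dual K H, brG (0, ξ) (0, ζ) = 0)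
    (i j k : Bool) (u : H) (hu : u ∈ sub i) (ζ : Module.Dual K H) (hζ : ζ ∈ dualSub K H sub j)
    (η : Module.Dual K H) (hη : η ∈ dualSub K H sub k) :
    Jex (K := K) brG i j k (u, 0) (0, ζ) (0, η) = 0 := by
  unfold Jex
  rw [hbrG4 ζ η, hbrG3 i k u hu η hη, hbrG2 i j u hu ζ hζ, bilin_zero_right hbrGbil,
    hbrG4, hbrG4]
  simp

lemma jacDDD
    (hbrGbil : IsBilinMap K (H × Module.Dual K H) (H × Module.Dual K H) brG)
    (hbrG4 : ∀ ξ ζ : Module.Dual K H, brG (0, ξ) (0, ζ) = 0)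
    (i j k : Bool) (ξ ζ η : Module.Dual K H) :
    Jex (K := K) brG i j k (0, ξ) (0, ζ) (0, η) = 0 := by
  unfold Jex
  rw [hbrG4, hbrG4, hbrG4, bilin_zero_right hbrGbil, bilin_zero_right hbrGbil,
    bilin_zero_right hbrGbil]
  simp

/-- The full super Jacobi identity for the `T*`-extension bracket. -/
lemma jacFull
    (hbrbil : IsBilinMap K H H br)
    (hgr : ∀ i j : Bool, ∀ u ∈ sub i, ∀ v ∈ sub j, conn u v ∈ sub (Bool.xor i j))
    (hgrbr : ∀ i j : Bool, ∀ x ∈ sub i, ∀ y ∈ sub j, br x y ∈ sub (Bool.xor i j))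
    (hbranti : ∀ i j : Bool, ∀ x ∈ sub i, ∀ y ∈ sub j, br y x = -(ssign K i j • br x y))
    (hjac : ∀ i j k : Bool, ∀ x ∈ sub i, ∀ y ∈ sub j, ∀ z ∈ sub k,
      ssign K i k • br x (br y z) + ssign K j i • br y (br z x) + ssign K k j • br z (br x y) = 0)
    (hFlat : ∀ i j : Bool, ∀ u ∈ sub i, ∀ v ∈ sub j, ∀ w : H,
      conn u (conn v w) - ssign K i j • conn v (conn u w) = conn (br u v) w)
    (hαbil : IsBilinMap K H (Module.Dual K H) α)
    (hαeven : ∀ i j : Bool, ∀ u ∈ sub i, ∀ v ∈ sub j,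
      α u v ∈ dualSub K H sub (Bool.xor i j))
    (hαskew : ∀ i j : Bool, ∀ u ∈ sub i, ∀ v ∈ sub j, α v u = -(ssign K i j • α u v))
    (hαcoc : ∀ i j k : Bool, ∀ u ∈ sub i, ∀ v ∈ sub j, ∀ w ∈ sub k,
      -(ssign K i (Bool.xor j k)) • ((α v w).comp (conn u))
        - ssign K i j • (-(ssign K j (Bool.xor i k)) • ((α u w).comp (conn v)))
        + (ssign K k i * ssign K k j) • (-(ssign K k (Bool.xor i j)) • ((α u v).comp (conn w)))
        - α (br u v) w + ssign K j k • α (br u w) v + α u (br v w) = 0)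
    (hbrGbil : IsBilinMap K (H × Module.Dual K H) (H × Module.Dual K H) brG)
    (hbrG1 : ∀ u v : H, brG (u, 0) (v, 0) = (br u v, α u v))
    (hbrG2 : ∀ i j : Bool, ∀ u ∈ sub i, ∀ ξ ∈ dualSub K H sub j,
      brG (u, 0) (0, ξ) = (0, -(ssign K i j) • (ξ.comp (conn u))))
    (hbrG3 : ∀ i j : Bool, ∀ u ∈ sub i, ∀ ξ ∈ dualSub K H sub j,
      brG (0, ξ) (u, 0) = (0, ξ.comp (conn u)))
    (hbrG4 : ∀ ξ ζ : Module.Dual K H, brG (0, ξ) (0, ζ) = 0)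
    (i j k : Bool)
    (x : H × Module.Dual K H) (hx : x ∈ (sub i).prod (dualSub K H sub i))
    (y : H × Module.Dual K H) (hy : y ∈ (sub j).prod (dualSub K H sub j))
    (z : H × Module.Dual K H) (hz : z ∈ (sub k).prod (dualSub K H sub k)) :
    ssign K i k • brG x (brG y z) + ssign K j i • brG y (brG z x)
      + ssign K k j • brG z (brG x y) = 0 := by
  obtain ⟨u, ξ⟩ := x
  obtain ⟨v, ζ⟩ := y
  obtain ⟨w, η⟩ := z
  obtain ⟨hu, hξ⟩ := hx
  obtain ⟨hv, hζ⟩ := hy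
  obtain ⟨hw, hη⟩ := hz
  have t1 : Jex (K := K) brG i j k (u,0) (v,0) (w,0) = 0 :=
    jacHHH hbrbil hgrbr hbranti hjac hαbil hαeven hαskew hαcoc hbrGbil hbrG1 hbrG2
      i j k u hu v hv w hw
  have t2 : Jex (K := K) brG i j k (u,0) (v,0) (0,η) = 0 :=
    jacHHD hgr hgrbr hFlat hαeven hbrGbil hbrG1 hbrG2 hbrG3 hbrG4 i j k u hu v hv η hη
  have t3 : Jex (K := K) brG i j k (u,0) (0,ζ) (w,0) = 0 := by
    rw [jacCyc]
    exact jacHHD hgr hgrbr hFlat hαeven hbrGbil hbrG1 hbrG2 hbrG3 hbrG4 k i j w hw u hu ζ hζ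
  have t4 : Jex (K := K) brG i j k (0,ξ) (v,0) (w,0) = 0 := by
    rw [jacCyc, jacCyc]
    exact jacHHD hgr hgrbr hFlat hαeven hbrGbil hbrG1 hbrG2 hbrG3 hbrG4 j k i v hv w hw ξ hξ
  have t5 : Jex (K := K) brG i j k (u,0) (0,ζ) (0,η) = 0 :=
    jacHDD hbrGbil hbrG2 hbrG3 hbrG4 i j k u hu ζ hζ η hη
  have t6 : Jex (K := K) brG i j k (0,ξ) (v,0) (0,η) = 0 := by
    rw [jacCyc, jacCyc]
    exact jacHDD hbrGbil hbrG2 hbrG3 hbrG4 j k i v hv η hη ξ hξ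
  have t7 : Jex (K := K) brG i j k (0,ξ) (0,ζ) (w,0) = 0 := by
    rw [jacCyc]
    exact jacHDD hbrGbil hbrG2 hbrG3 hbrG4 k i j w hw ξ hξ ζ hζ
  have t8 : Jex (K := K) brG i j k (0,ξ) (0,ζ) (0,η) = 0 :=
    jacDDD hbrGbil hbrG4 i j k ξ ζ η
  have hsplit : ∀ (a : H) (φ : Module.Dual K H),
      ((a, φ) : H × Module.Dual K H) = (a, 0) + (0, φ) := by intro a φ; simp
  show Jex (K := K) brG i j k (u, ξ) (v, ζ) (w, η) = 0
  rw [hsplit u ξ, hsplit v ζ, hsplit w η, jacExpand hbrGbil, t1, t2, t3, t4, t5, t6, t7, t8]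
  simp

/-- The key char-3 identity: for odd `u`, `α u [u,u] = (α u u) ∘ ∇_u`. -/
lemma char3Star
    (hcompl : IsCompl (sub false) (sub true))
    (hbrbil : IsBilinMap K H H br)
    (hgr : ∀ i j : Bool, ∀ u ∈ sub i, ∀ v ∈ sub j, conn u v ∈ sub (Bool.xor i j))
    (hgrbr : ∀ i j : Bool, ∀ x ∈ sub i, ∀ y ∈ sub j, br x y ∈ sub (Bool.xor i j))
    (hbranti : ∀ i j : Bool, ∀ x ∈ sub i, ∀ y ∈ sub j, br y x = -(ssign K i j • br x y))
    (hTF : ∀ i j : Bool, ∀ u ∈ sub i, ∀ v ∈ sub j,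
      conn u v - ssign K i j • conn v u = br u v)
    (hαbil : IsBilinMap K H (Module.Dual K H) α)
    (hαskew : ∀ i j : Bool, ∀ u ∈ sub i, ∀ v ∈ sub j, α v u = -(ssign K i j • α u v))
    (hαcoc : ∀ i j k : Bool, ∀ u ∈ sub i, ∀ v ∈ sub j, ∀ w ∈ sub k,
      -(ssign K i (Bool.xor j k)) • ((α v w).comp (conn u))
        - ssign K i j • (-(ssign K j (Bool.xor i k)) • ((α u w).comp (conn v)))
        + (ssign K k i * ssign K k j) • (-(ssign K k (Bool.xor i j)) • ((α u v).comp (conn w)))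
        - α (br u v) w + ssign K j k • α (br u w) v + α u (br v w) = 0)
    (hcyc : ∀ i j k : Bool, ∀ u ∈ sub i, ∀ v ∈ sub j, ∀ w ∈ sub k,
      ssign K i k * α u v w + ssign K k j * α w u v + ssign K j i * α v w u = 0)
    (h3 : (3 : K) = 0)
    (u : H) (hu : u ∈ sub true) (m : H) :
    (α u (br u u)) m = (α u u) (conn u m) := by
  have hb : br u u ∈ sub false := by simpa using hgrbr true true u hu u hu
  -- the homogeneous case
  have key : ∀ k : Bool, ∀ z ∈ sub k, (α u (br u u)) z = (α u u) (conn u z) := by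
    intro k z hz
    have hp : br u z ∈ sub (Bool.xor true k) := hgrbr true k u hu z hz
    have e1 := hcyc true false k u hu (br u u) hb z hz
    have e2 := LinearMap.congr_fun (hαskew true k u hu z hz) (br u u)
    have e4 := hcyc true true (Bool.xor true k) u hu u hu (br u z) hp
    have e5 := LinearMap.congr_fun (hαskew true (Bool.xor true k) u hu (br u z) hp) u
    have e10 := congrArg (α u u) (hTF k true z hz u hu)
    have e11 := congrArg (α u u) (hbranti true k u hu z hz)
    have e13 := congrArg (α u z) (hTF true true u hu u hu)
    simp only [LinearMap.neg_apply, LinearMap.smul_apply, smul_eq_mul, map_sub, map_smul,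
      map_neg] at e2 e5 e10 e11 e13
    have hc := hαcoc true k true u hu z hz u hu
    rw [hbranti true k u hu z hz, bilin_neg_smul_right hαbil, hαskew true k u hu z hz] at hc
    simp only [LinearMap.neg_comp, LinearMap.smul_comp] at hc
    have e8 := LinearMap.congr_fun hc u
    simp only [LinearMap.add_apply, LinearMap.sub_apply, LinearMap.neg_apply,
      LinearMap.smul_apply, LinearMap.comp_apply, LinearMap.zero_apply, smul_eq_mul] at e8
    cases k <;>
      simp only [ssign_false_left, ssign_false_right, ssign_true_true, Bool.xor_self,
        Bool.xor_false, Bool.false_xor, Bool.xor_true, Bool.true_xor, Bool.not_true,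
        Bool.not_false] at e1 e2 e4 e5 e8 e10 e11 e13 ⊢
    · linear_combination e1 + 2*e2 + e4 + 2*e8 + e10 + e11 + 2*e13 +
        ((α u (br u z)) u - (α z u) (br u u) - (α (br u u) z) u + (α (br u z) u) u
          - (α u u) (conn z u)) * h3
    · linear_combination 2*e1 + e2 + 2*e4 + 2*e8 + 2*e10 + 2*e11 + 2*e13 +
        ((α u (br u u)) z - (α u u) (conn u z) + (α u z) (br u u) - (α z u) (br u u)) * h3
  obtain ⟨a, ha, b, hbm, rfl⟩ := decomp_of_isCompl hcompl m
  simp only [map_add, key false a ha, key true b hbm]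

/-- The char-3 cubic condition for the `T*`-extension bracket. -/
lemma jac3Full
    (hcompl : IsCompl (sub false) (sub true))
    (hbrbil : IsBilinMap K H H br)
    (hgr : ∀ i j : Bool, ∀ u ∈ sub i, ∀ v ∈ sub j, conn u v ∈ sub (Bool.xor i j))
    (hgrbr : ∀ i j : Bool, ∀ x ∈ sub i, ∀ y ∈ sub j, br x y ∈ sub (Bool.xor i j))
    (hbranti : ∀ i j : Bool, ∀ x ∈ sub i, ∀ y ∈ sub j, br y x = -(ssign K i j • br x y))
    (hTF : ∀ i j : Bool, ∀ u ∈ sub i, ∀ v ∈ sub j,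
      conn u v - ssign K i j • conn v u = br u v)
    (hFlat : ∀ i j : Bool, ∀ u ∈ sub i, ∀ v ∈ sub j, ∀ w : H,
      conn u (conn v w) - ssign K i j • conn v (conn u w) = conn (br u v) w)
    (hjac3 : ringChar K = 3 → ∀ f ∈ sub true, br f (br f f) = 0)
    (hαbil : IsBilinMap K H (Module.Dual K H) α)
    (hαeven : ∀ i j : Bool, ∀ u ∈ sub i, ∀ v ∈ sub j,
      α u v ∈ dualSub K H sub (Bool.xor i j))
    (hαskew : ∀ i j : Bool, ∀ u ∈ sub i, ∀ v ∈ sub j, α v u = -(ssign K i j • α u v))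
    (hαcoc : ∀ i j k : Bool, ∀ u ∈ sub i, ∀ v ∈ sub j, ∀ w ∈ sub k,
      -(ssign K i (Bool.xor j k)) • ((α v w).comp (conn u))
        - ssign K i j • (-(ssign K j (Bool.xor i k)) • ((α u w).comp (conn v)))
        + (ssign K k i * ssign K k j) • (-(ssign K k (Bool.xor i j)) • ((α u v).comp (conn w)))
        - α (br u v) w + ssign K j k • α (br u w) v + α u (br v w) = 0)
    (hcyc : ∀ i j k : Bool, ∀ u ∈ sub i, ∀ v ∈ sub j, ∀ w ∈ sub k,
      ssign K i k * α u v w + ssign K k j * α w u v + ssign K j i * α v w u = 0)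
    (hbrGbil : IsBilinMap K (H × Module.Dual K H) (H × Module.Dual K H) brG)
    (hbrG1 : ∀ u v : H, brG (u, 0) (v, 0) = (br u v, α u v))
    (hbrG2 : ∀ i j : Bool, ∀ u ∈ sub i, ∀ ξ ∈ dualSub K H sub j,
      brG (u, 0) (0, ξ) = (0, -(ssign K i j) • (ξ.comp (conn u))))
    (hbrG3 : ∀ i j : Bool, ∀ u ∈ sub i, ∀ ξ ∈ dualSub K H sub j,
      brG (0, ξ) (u, 0) = (0, ξ.comp (conn u)))
    (hbrG4 : ∀ ξ ζ : Module.Dual K H, brG (0, ξ) (0, ζ) = 0)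
    (hchar3 : ringChar K = 3)
    (u : H) (hu : u ∈ sub true) (ξ : Module.Dual K H) (hξ : ξ ∈ dualSub K H sub true) :
    brG (u, ξ) (brG (u, ξ) (u, ξ)) = 0 := by
  have h3 : (3 : K) = 0 := by
    have h := CharP.cast_eq_zero K (ringChar K)
    rw [hchar3] at h
    exact_mod_cast h
  have hsplit : ∀ (a : H) (φ : Module.Dual K H),
      ((a, φ) : H × Module.Dual K H) = (a, 0) + (0, φ) := by intro a φ; simp
  have hbb : br u u ∈ sub false := by simpa using hgrbr true true u hu u hu
  have hαuu : α u u ∈ dualSub K H sub false := by simpa using hαeven true true u hu u hu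
  have hξc : ξ.comp (conn u) ∈ dualSub K H sub false := by
    simpa using comp_mem_dualSub hgr hu hξ
  set β : Module.Dual K H := α u u + (ξ.comp (conn u) + ξ.comp (conn u)) with hβdef
  have hβ : β ∈ dualSub K H sub false := add_mem hαuu (add_mem hξc hξc)
  have hff : brG (u, ξ) (u, ξ) = (br u u, β) := by
    rw [hsplit u ξ, hbrGbil.1, hbrGbil.2.2.1, hbrGbil.2.2.1, hbrG1 u u,
      hbrG2 true true u hu ξ hξ, hbrG3 true true u hu ξ hξ, hbrG4]
    rw [Prod.ext_iff]
    constructor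
    · simp
    · simp only [ssign_true_true, hβdef, Prod.snd_add, Prod.fst_add]
      simp
      abel
  rw [hff, hsplit u ξ, hsplit (br u u) β, hbrGbil.1, hbrGbil.2.2.1, hbrGbil.2.2.1,
    hbrG1 u (br u u), hbrG2 true false u hu β hβ,
    hbrG3 false true (br u u) hbb ξ hξ, hbrG4]
  rw [hjac3 hchar3 u hu]
  rw [Prod.ext_iff]
  constructor
  · simp
  · simp only [Prod.snd_add, Prod.snd_zero]
    refine LinearMap.ext fun m => ?_
    have s1 := char3Star hcompl hbrbil hgr hgrbr hbranti hTF hαbil hαskew hαcoc hcyc h3 u hu m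
    have f1 := congrArg ξ (hFlat true true u hu u hu m)
    simp only [map_sub, map_smul, smul_eq_mul, ssign_true_true] at f1
    simp only [hβdef, LinearMap.add_apply, LinearMap.smul_apply, LinearMap.neg_apply,
      LinearMap.comp_apply, LinearMap.zero_apply, ssign_false_right, smul_eq_mul]
    linear_combination s1 - f1

lemma gradedFull
    (hgr : ∀ i j : Bool, ∀ u ∈ sub i, ∀ v ∈ sub j, conn u v ∈ sub (Bool.xor i j))
    (hgrbr : ∀ i j : Bool, ∀ x ∈ sub i, ∀ y ∈ sub j, br x y ∈ sub (Bool.xor i j))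
    (hαeven : ∀ i j : Bool, ∀ u ∈ sub i, ∀ v ∈ sub j,
      α u v ∈ dualSub K H sub (Bool.xor i j))
    (hbrGbil : IsBilinMap K (H × Module.Dual K H) (H × Module.Dual K H) brG)
    (hbrG1 : ∀ u v : H, brG (u, 0) (v, 0) = (br u v, α u v))
    (hbrG2 : ∀ i j : Bool, ∀ u ∈ sub i, ∀ ξ ∈ dualSub K H sub j,
      brG (u, 0) (0, ξ) = (0, -(ssign K i j) • (ξ.comp (conn u))))
    (hbrG3 : ∀ i j : Bool, ∀ u ∈ sub i, ∀ ξ ∈ dualSub K H sub j,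
      brG (0, ξ) (u, 0) = (0, ξ.comp (conn u)))
    (hbrG4 : ∀ ξ ζ : Module.Dual K H, brG (0, ξ) (0, ζ) = 0)
    (i j : Bool)
    (x : H × Module.Dual K H) (hx : x ∈ (sub i).prod (dualSub K H sub i))
    (y : H × Module.Dual K H) (hy : y ∈ (sub j).prod (dualSub K H sub j)) :
    brG x y ∈ (sub (Bool.xor i j)).prod (dualSub K H sub (Bool.xor i j)) := by
  obtain ⟨u, ξ⟩ := x; obtain ⟨v, ζ⟩ := y
  obtain ⟨hu, hξ⟩ := hx; obtain ⟨hv, hζ⟩ := hy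
  have hsplit : ∀ (a : H) (φ : Module.Dual K H),
      ((a, φ) : H × Module.Dual K H) = (a, 0) + (0, φ) := by intro a φ; simp
  rw [hsplit u ξ, hsplit v ζ, hbrGbil.1, hbrGbil.2.2.1, hbrGbil.2.2.1,
    hbrG1 u v, hbrG2 i j u hu ζ hζ, hbrG3 j i v hv ξ hξ, hbrG4]
  refine add_mem (add_mem ?_ ?_) (add_mem ?_ (zero_mem _))
  · exact ⟨hgrbr i j u hu v hv, hαeven i j u hu v hv⟩
  · exact ⟨zero_mem _, Submodule.smul_mem _ _ (comp_mem_dualSub hgr hu hζ)⟩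
  · have := comp_mem_dualSub hgr hv hξ
    rw [Bool.xor_comm j i] at this
    exact ⟨zero_mem _, this⟩

lemma antiFull
    (hbranti : ∀ i j : Bool, ∀ x ∈ sub i, ∀ y ∈ sub j, br y x = -(ssign K i j • br x y))
    (hαskew : ∀ i j : Bool, ∀ u ∈ sub i, ∀ v ∈ sub j, α v u = -(ssign K i j • α u v))
    (hbrGbil : IsBilinMap K (H × Module.Dual K H) (H × Module.Dual K H) brG)
    (hbrG1 : ∀ u v : H, brG (u, 0) (v, 0) = (br u v, α u v))
    (hbrG2 : ∀ i j : Bool, ∀ u ∈ sub i, ∀ ξ ∈ dualSub K H sub j,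
      brG (u, 0) (0, ξ) = (0, -(ssign K i j) • (ξ.comp (conn u))))
    (hbrG3 : ∀ i j : Bool, ∀ u ∈ sub i, ∀ ξ ∈ dualSub K H sub j,
      brG (0, ξ) (u, 0) = (0, ξ.comp (conn u)))
    (hbrG4 : ∀ ξ ζ : Module.Dual K H, brG (0, ξ) (0, ζ) = 0)
    (i j : Bool)
    (x : H × Module.Dual K H) (hx : x ∈ (sub i).prod (dualSub K H sub i))
    (y : H × Module.Dual K H) (hy : y ∈ (sub j).prod (dualSub K H sub j)) :
    brG y x = -(ssign K i j • brG x y) := by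
  obtain ⟨u, ξ⟩ := x; obtain ⟨v, ζ⟩ := y
  obtain ⟨hu, hξ⟩ := hx; obtain ⟨hv, hζ⟩ := hy
  have hsplit : ∀ (a : H) (φ : Module.Dual K H),
      ((a, φ) : H × Module.Dual K H) = (a, 0) + (0, φ) := by intro a φ; simp
  rw [hsplit u ξ, hsplit v ζ, hbrGbil.1, hbrGbil.1, hbrGbil.2.2.1, hbrGbil.2.2.1,
    hbrGbil.2.2.1, hbrGbil.2.2.1, hbrG1 u v, hbrG1 v u, hbrG2 i j u hu ζ hζ,
    hbrG2 j i v hv ξ hξ, hbrG3 j i v hv ξ hξ, hbrG3 i j u hu ζ hζ, hbrG4, hbrG4,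
    hbranti i j u hu v hv, hαskew i j u hu v hv]
  simp only [add_zero, Prod.mk_add_mk, Prod.smul_mk, Prod.neg_mk, Prod.mk.injEq]
  constructor <;>
    (cases i <;> cases j <;>
      simp only [ssign_false_left, ssign_false_right, ssign_true_true] <;> module)

variable {ωG : H × Module.Dual K H → H × Module.Dual K H → K}

/-- The closedness expression. -/
def Cex {K G : Type*} [Field K] [AddCommGroup G] [Module K G] (ω : G → G → K) (brG : G → G → G)
    (i j k : Bool) (x y z : G) : K :=
  ssign K i k * ω x (brG y z) + ssign K k j * ω z (brG x y) + ssign K j i * ω y (brG z x)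

lemma cCyc {K G : Type*} [Field K] [AddCommGroup G] [Module K G] (ω : G → G → K)
    (brG : G → G → G) (i j k : Bool) (x y z : G) :
    Cex ω brG i j k x y z = Cex ω brG k i j z x y := by
  unfold Cex; ring

lemma cExpand {K G : Type*} [Field K] [AddCommGroup G] [Module K G] {ω : G → G → K}
    {brG : G → G → G} (hω : IsBilinMap K G K ω) (hb : IsBilinMap K G G brG)
    (i j k : Bool) (x1 x2 y1 y2 z1 z2 : G) :
    Cex ω brG i j k (x1 + x2) (y1 + y2) (z1 + z2) =
      Cex ω brG i j k x1 y1 z1 + Cex ω brG i j k x1 y1 z2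
      + Cex ω brG i j k x1 y2 z1 + Cex ω brG i j k x1 y2 z2
      + Cex ω brG i j k x2 y1 z1 + Cex ω brG i j k x2 y1 z2
      + Cex ω brG i j k x2 y2 z1 + Cex ω brG i j k x2 y2 z2 := by
  unfold Cex
  simp only [hb.1, hb.2.2.1, hω.1, hω.2.2.1]
  ring

lemma omegaDD
    (hωGval : ∀ i i' j j' : Bool, ∀ u ∈ sub i, ∀ ξ ∈ dualSub K H sub i',
      ∀ v ∈ sub j, ∀ ζ ∈ dualSub K H sub j',
      ωG (u, ξ) (v, ζ) = ξ v - ssign K j' i * ζ u)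
    (a b : Bool) (η : Module.Dual K H) (hη : η ∈ dualSub K H sub a)
    (ψ : Module.Dual K H) (hψ : ψ ∈ dualSub K H sub b) :
    ωG (0, η) (0, ψ) = 0 := by
  rw [hωGval a a b b 0 (zero_mem _) η hη 0 (zero_mem _) ψ hψ]
  simp

lemma cHHH
    (hgrbr : ∀ i j : Bool, ∀ x ∈ sub i, ∀ y ∈ sub j, br x y ∈ sub (Bool.xor i j))
    (hαeven : ∀ i j : Bool, ∀ u ∈ sub i, ∀ v ∈ sub j,
      α u v ∈ dualSub K H sub (Bool.xor i j))
    (hcyc : ∀ i j k : Bool, ∀ u ∈ sub i, ∀ v ∈ sub j, ∀ w ∈ sub k,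
      ssign K i k * α u v w + ssign K k j * α w u v + ssign K j i * α v w u = 0)
    (hbrG1 : ∀ u v : H, brG (u, 0) (v, 0) = (br u v, α u v))
    (hωGval : ∀ i i' j j' : Bool, ∀ u ∈ sub i, ∀ ξ ∈ dualSub K H sub i',
      ∀ v ∈ sub j, ∀ ζ ∈ dualSub K H sub j',
      ωG (u, ξ) (v, ζ) = ξ v - ssign K j' i * ζ u)
    (i j k : Bool) (u : H) (hu : u ∈ sub i) (v : H) (hv : v ∈ sub j) (w : H) (hw : w ∈ sub k) :
    Cex ωG brG i j k (u, 0) (v, 0) (w, 0) = 0 := by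
  unfold Cex
  rw [hbrG1 v w, hbrG1 u v, hbrG1 w u,
    hωGval i i (Bool.xor j k) (Bool.xor j k) u hu 0 (zero_mem _)
      (br v w) (hgrbr j k v hv w hw) (α v w) (hαeven j k v hv w hw),
    hωGval k k (Bool.xor i j) (Bool.xor i j) w hw 0 (zero_mem _)
      (br u v) (hgrbr i j u hu v hv) (α u v) (hαeven i j u hu v hv),
    hωGval j j (Bool.xor k i) (Bool.xor k i) v hv 0 (zero_mem _)
      (br w u) (hgrbr k i w hw u hu) (α w u) (hαeven k i w hw u hu)]
  have hc := hcyc i j k u hu v hv w hw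
  simp only [LinearMap.zero_apply, zero_sub]
  cases i <;> cases j <;> cases k <;>
    simp only [ssign_false_left, ssign_false_right, ssign_true_true, Bool.xor_self,
      Bool.xor_false, Bool.false_xor, Bool.xor_true, Bool.true_xor, Bool.not_true,
      Bool.not_false] at hc ⊢ <;>
    linear_combination -hc

lemma cHHD
    (hgr : ∀ i j : Bool, ∀ u ∈ sub i, ∀ v ∈ sub j, conn u v ∈ sub (Bool.xor i j))
    (hgrbr : ∀ i j : Bool, ∀ x ∈ sub i, ∀ y ∈ sub j, br x y ∈ sub (Bool.xor i j))
    (hTF : ∀ i j : Bool, ∀ u ∈ sub i, ∀ v ∈ sub j,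
      conn u v - ssign K i j • conn v u = br u v)
    (hαeven : ∀ i j : Bool, ∀ u ∈ sub i, ∀ v ∈ sub j,
      α u v ∈ dualSub K H sub (Bool.xor i j))
    (hωGbil : IsBilinMap K (H × Module.Dual K H) K ωG)
    (hbrG1 : ∀ u v : H, brG (u, 0) (v, 0) = (br u v, α u v))
    (hbrG2 : ∀ i j : Bool, ∀ u ∈ sub i, ∀ ξ ∈ dualSub K H sub j,
      brG (u, 0) (0, ξ) = (0, -(ssign K i j) • (ξ.comp (conn u))))
    (hbrG3 : ∀ i j : Bool, ∀ u ∈ sub i, ∀ ξ ∈ dualSub K H sub j,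
      brG (0, ξ) (u, 0) = (0, ξ.comp (conn u)))
    (hωGval : ∀ i i' j j' : Bool, ∀ u ∈ sub i, ∀ ξ ∈ dualSub K H sub i',
      ∀ v ∈ sub j, ∀ ζ ∈ dualSub K H sub j',
      ωG (u, ξ) (v, ζ) = ξ v - ssign K j' i * ζ u)
    (i j k : Bool) (u : H) (hu : u ∈ sub i) (v : H) (hv : v ∈ sub j)
    (η : Module.Dual K H) (hη : η ∈ dualSub K H sub k) :
    Cex ωG brG i j k (u, 0) (v, 0) (0, η) = 0 := by
  have esm : ∀ (d : K) (φ : Module.Dual K H),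
      ((0 : H), d • φ) = d • (((0 : H), φ) : H × Module.Dual K H) := by
    intro d φ; simp
  unfold Cex
  rw [hbrG2 j k v hv η hη, hbrG3 i k u hu η hη, hbrG1 u v, esm, hωGbil.2.2.2,
    hωGval i i (Bool.xor j k) (Bool.xor j k) u hu 0 (zero_mem _) 0 (zero_mem _)
      (η.comp (conn v)) (comp_mem_dualSub hgr hv hη),
    hωGval k k (Bool.xor i j) (Bool.xor i j) 0 (zero_mem _) η hη
      (br u v) (hgrbr i j u hu v hv) (α u v) (hαeven i j u hu v hv),
    hωGval j j (Bool.xor i k) (Bool.xor i k) v hv 0 (zero_mem _) 0 (zero_mem _)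
      (η.comp (conn u)) (comp_mem_dualSub hgr hu hη)]
  have e := congrArg η (hTF i j u hu v hv)
  simp only [map_sub, map_smul, smul_eq_mul] at e
  simp only [LinearMap.zero_apply, LinearMap.comp_apply, map_zero, zero_sub, sub_zero,
    smul_eq_mul, mul_zero]
  cases i <;> cases j <;> cases k <;>
    simp only [ssign_false_left, ssign_false_right, ssign_true_true, Bool.xor_self,
      Bool.xor_false, Bool.false_xor, Bool.xor_true, Bool.true_xor, Bool.not_true,
      Bool.not_false] at e ⊢ <;>
    first
      | linear_combination e
      | linear_combination -e

lemma cHDD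
    (hgr : ∀ i j : Bool, ∀ u ∈ sub i, ∀ v ∈ sub j, conn u v ∈ sub (Bool.xor i j))
    (hωGbil : IsBilinMap K (H × Module.Dual K H) K ωG)
    (hbrG2 : ∀ i j : Bool, ∀ u ∈ sub i, ∀ ξ ∈ dualSub K H sub j,
      brG (u, 0) (0, ξ) = (0, -(ssign K i j) • (ξ.comp (conn u))))
    (hbrG3 : ∀ i j : Bool, ∀ u ∈ sub i, ∀ ξ ∈ dualSub K H sub j,
      brG (0, ξ) (u, 0) = (0, ξ.comp (conn u)))
    (hbrG4 : ∀ ξ ζ : Module.Dual K H, brG (0, ξ) (0, ζ) = 0)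
    (hωGval : ∀ i i' j j' : Bool, ∀ u ∈ sub i, ∀ ξ ∈ dualSub K H sub i',
      ∀ v ∈ sub j, ∀ ζ ∈ dualSub K H sub j',
      ωG (u, ξ) (v, ζ) = ξ v - ssign K j' i * ζ u)
    (i j k : Bool) (u : H) (hu : u ∈ sub i) (ζ : Module.Dual K H) (hζ : ζ ∈ dualSub K H sub j)
    (η : Module.Dual K H) (hη : η ∈ dualSub K H sub k) :
    Cex ωG brG i j k (u, 0) (0, ζ) (0, η) = 0 := by
  have esm : ∀ (d : K) (φ : Module.Dual K H),
      ((0 : H), d • φ) = d • (((0 : H), φ) : H × Module.Dual K H) := by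
    intro d φ; simp
  unfold Cex
  rw [hbrG4 ζ η, hbrG2 i j u hu ζ hζ, hbrG3 i k u hu η hη, bilin_zero_right hωGbil,
    esm, hωGbil.2.2.2,
    omegaDD hωGval k (Bool.xor i j) η hη _ (comp_mem_dualSub hgr hu hζ),
    omegaDD hωGval j (Bool.xor i k) ζ hζ _ (comp_mem_dualSub hgr hu hη)]
  simp

lemma cDDD
    (hωGbil : IsBilinMap K (H × Module.Dual K H) K ωG)
    (hbrG4 : ∀ ξ ζ : Module.Dual K H, brG (0, ξ) (0, ζ) = 0)
    (i j k : Bool) (ξ ζ η : Module.Dual K H) :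
    Cex ωG brG i j k (0, ξ) (0, ζ) (0, η) = 0 := by
  unfold Cex
  rw [hbrG4, hbrG4, hbrG4, bilin_zero_right hωGbil, bilin_zero_right hωGbil,
    bilin_zero_right hωGbil]
  ring

lemma closedFull
    (hgr : ∀ i j : Bool, ∀ u ∈ sub i, ∀ v ∈ sub j, conn u v ∈ sub (Bool.xor i j))
    (hgrbr : ∀ i j : Bool, ∀ x ∈ sub i, ∀ y ∈ sub j, br x y ∈ sub (Bool.xor i j))
    (hTF : ∀ i j : Bool, ∀ u ∈ sub i, ∀ v ∈ sub j,
      conn u v - ssign K i j • conn v u = br u v)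
    (hαeven : ∀ i j : Bool, ∀ u ∈ sub i, ∀ v ∈ sub j,
      α u v ∈ dualSub K H sub (Bool.xor i j))
    (hcyc : ∀ i j k : Bool, ∀ u ∈ sub i, ∀ v ∈ sub j, ∀ w ∈ sub k,
      ssign K i k * α u v w + ssign K k j * α w u v + ssign K j i * α v w u = 0)
    (hbrGbil : IsBilinMap K (H × Module.Dual K H) (H × Module.Dual K H) brG)
    (hbrG1 : ∀ u v : H, brG (u, 0) (v, 0) = (br u v, α u v))
    (hbrG2 : ∀ i j : Bool, ∀ u ∈ sub i, ∀ ξ ∈ dualSub K H sub j,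
      brG (u, 0) (0, ξ) = (0, -(ssign K i j) • (ξ.comp (conn u))))
    (hbrG3 : ∀ i j : Bool, ∀ u ∈ sub i, ∀ ξ ∈ dualSub K H sub j,
      brG (0, ξ) (u, 0) = (0, ξ.comp (conn u)))
    (hbrG4 : ∀ ξ ζ : Module.Dual K H, brG (0, ξ) (0, ζ) = 0)
    (hωGbil : IsBilinMap K (H × Module.Dual K H) K ωG)
    (hωGval : ∀ i i' j j' : Bool, ∀ u ∈ sub i, ∀ ξ ∈ dualSub K H sub i',
      ∀ v ∈ sub j, ∀ ζ ∈ dualSub K H sub j',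
      ωG (u, ξ) (v, ζ) = ξ v - ssign K j' i * ζ u)
    (i j k : Bool)
    (x : H × Module.Dual K H) (hx : x ∈ (sub i).prod (dualSub K H sub i))
    (y : H × Module.Dual K H) (hy : y ∈ (sub j).prod (dualSub K H sub j))
    (z : H × Module.Dual K H) (hz : z ∈ (sub k).prod (dualSub K H sub k)) :
    ssign K i k * ωG x (brG y z) + ssign K k j * ωG z (brG x y)
      + ssign K j i * ωG y (brG z x) = 0 := by
  obtain ⟨u, ξ⟩ := x; obtain ⟨v, ζ⟩ := y; obtain ⟨w, η⟩ := z
  obtain ⟨hu, hξ⟩ := hx; obtain ⟨hv, hζ⟩ := hy; obtain ⟨hw, hη⟩ := hz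
  have t1 : Cex ωG brG i j k (u,0) (v,0) (w,0) = 0 :=
    cHHH hgrbr hαeven hcyc hbrG1 hωGval i j k u hu v hv w hw
  have t2 : Cex ωG brG i j k (u,0) (v,0) (0,η) = 0 :=
    cHHD hgr hgrbr hTF hαeven hωGbil hbrG1 hbrG2 hbrG3 hωGval i j k u hu v hv η hη
  have t3 : Cex ωG brG i j k (u,0) (0,ζ) (w,0) = 0 := by
    rw [cCyc]
    exact cHHD hgr hgrbr hTF hαeven hωGbil hbrG1 hbrG2 hbrG3 hωGval k i j w hw u hu ζ hζ
  have t4 : Cex ωG brG i j k (0,ξ) (v,0) (w,0) = 0 := by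
    rw [cCyc, cCyc]
    exact cHHD hgr hgrbr hTF hαeven hωGbil hbrG1 hbrG2 hbrG3 hωGval j k i v hv w hw ξ hξ
  have t5 : Cex ωG brG i j k (u,0) (0,ζ) (0,η) = 0 :=
    cHDD hgr hωGbil hbrG2 hbrG3 hbrG4 hωGval i j k u hu ζ hζ η hη
  have t6 : Cex ωG brG i j k (0,ξ) (v,0) (0,η) = 0 := by
    rw [cCyc, cCyc]
    exact cHDD hgr hωGbil hbrG2 hbrG3 hbrG4 hωGval j k i v hv η hη ξ hξ
  have t7 : Cex ωG brG i j k (0,ξ) (0,ζ) (w,0) = 0 := by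
    rw [cCyc]
    exact cHDD hgr hωGbil hbrG2 hbrG3 hbrG4 hωGval k i j w hw ξ hξ ζ hζ
  have t8 : Cex ωG brG i j k (0,ξ) (0,ζ) (0,η) = 0 := cDDD hωGbil hbrG4 i j k ξ ζ η
  have hsplit : ∀ (a : H) (φ : Module.Dual K H),
      ((a, φ) : H × Module.Dual K H) = (a, 0) + (0, φ) := by intro a φ; simp
  show Cex ωG brG i j k (u, ξ) (v, ζ) (w, η) = 0
  rw [hsplit u ξ, hsplit v ζ, hsplit w η, cExpand hωGbil hbrGbil,
    t1, t2, t3, t4, t5, t6, t7, t8]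
  ring

lemma skewFull
    (hωGval : ∀ i i' j j' : Bool, ∀ u ∈ sub i, ∀ ξ ∈ dualSub K H sub i',
      ∀ v ∈ sub j, ∀ ζ ∈ dualSub K H sub j',
      ωG (u, ξ) (v, ζ) = ξ v - ssign K j' i * ζ u)
    (i j : Bool)
    (x : H × Module.Dual K H) (hx : x ∈ (sub i).prod (dualSub K H sub i))
    (y : H × Module.Dual K H) (hy : y ∈ (sub j).prod (dualSub K H sub j)) :
    ωG y x = -(ssign K i j * ωG x y) := by
  obtain ⟨u, ξ⟩ := x; obtain ⟨v, ζ⟩ := y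
  obtain ⟨hu, hξ⟩ := hx; obtain ⟨hv, hζ⟩ := hy
  rw [hωGval j j i i v hv ζ hζ u hu ξ hξ, hωGval i i j j u hu ξ hξ v hv ζ hζ]
  cases i <;> cases j <;>
    simp only [ssign_false_left, ssign_false_right, ssign_true_true] <;> ring

lemma evenFull
    (hωGval : ∀ i i' j j' : Bool, ∀ u ∈ sub i, ∀ ξ ∈ dualSub K H sub i',
      ∀ v ∈ sub j, ∀ ζ ∈ dualSub K H sub j',
      ωG (u, ξ) (v, ζ) = ξ v - ssign K j' i * ζ u)
    (x y : H × Module.Dual K H)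
    (h : (x ∈ (sub false).prod (dualSub K H sub false)
            ∧ y ∈ (sub true).prod (dualSub K H sub true))
        ∨ (x ∈ (sub true).prod (dualSub K H sub true)
            ∧ y ∈ (sub false).prod (dualSub K H sub false))) :
    ωG x y = 0 := by
  obtain ⟨u, ξ⟩ := x; obtain ⟨v, ζ⟩ := y
  rcases h with ⟨⟨hu, hξ⟩, hv, hζ⟩ | ⟨⟨hu, hξ⟩, hv, hζ⟩
  · rw [hωGval false false true true u hu ξ hξ v hv ζ hζ,
      mem_dualSub.mp hξ v hv, mem_dualSub.mp hζ u hu]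
    simp
  · rw [hωGval true true false false u hu ξ hξ v hv ζ hζ,
      mem_dualSub.mp hξ v hv, mem_dualSub.mp hζ u hu]
    simp

lemma sndZero
    (hcompl : IsCompl (sub false) (sub true))
    (hωGbil : IsBilinMap K (H × Module.Dual K H) K ωG)
    (hωGval : ∀ i i' j j' : Bool, ∀ u ∈ sub i, ∀ ξ ∈ dualSub K H sub i',
      ∀ v ∈ sub j, ∀ ζ ∈ dualSub K H sub j',
      ωG (u, ξ) (v, ζ) = ξ v - ssign K j' i * ζ u)
    (a : H) (ξ : Module.Dual K H) (h : ∀ v : H, ωG (a, ξ) (v, 0) = 0) : ξ = 0 := by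
  obtain ⟨a0, ha0, a1, ha1, haeq⟩ := decomp_of_isCompl hcompl a
  obtain ⟨ξ0, hξ0, ξ1, hξ1, hξeq⟩ := decomp_of_isCompl (dualSub_isCompl hcompl) ξ
  refine LinearMap.ext fun v => ?_
  obtain ⟨v0, hv0, v1, hv1, hveq⟩ := decomp_of_isCompl hcompl v
  have key : ωG (a, ξ) (v, 0) = ξ v := by
    have e1 : ((a, ξ) : H × Module.Dual K H) = (a0, ξ0) + (a1, ξ1) := by
      rw [Prod.mk_add_mk, ← haeq, ← hξeq]
    have e2 : ((v, (0 : Module.Dual K H)) : H × Module.Dual K H) = (v0, 0) + (v1, 0) := by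
      rw [Prod.mk_add_mk, ← hveq, add_zero]
    rw [e1, e2, hωGbil.1, hωGbil.2.2.1, hωGbil.2.2.1,
      hωGval false false false false a0 ha0 ξ0 hξ0 v0 hv0 0 (zero_mem _),
      hωGval false false true false a0 ha0 ξ0 hξ0 v1 hv1 0 (zero_mem _),
      hωGval true true false false a1 ha1 ξ1 hξ1 v0 hv0 0 (zero_mem _),
      hωGval true true true false a1 ha1 ξ1 hξ1 v1 hv1 0 (zero_mem _),
      hξeq, hveq]
    simp only [LinearMap.zero_apply, mul_zero, sub_zero, LinearMap.add_apply, map_add]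
    ring
  rw [← key, h v, LinearMap.zero_apply]

lemma fstZero
    (hcompl : IsCompl (sub false) (sub true))
    (hωGbil : IsBilinMap K (H × Module.Dual K H) K ωG)
    (hωGval : ∀ i i' j j' : Bool, ∀ u ∈ sub i, ∀ ξ ∈ dualSub K H sub i',
      ∀ v ∈ sub j, ∀ ζ ∈ dualSub K H sub j',
      ωG (u, ξ) (v, ζ) = ξ v - ssign K j' i * ζ u)
    (a : H) (ξ : Module.Dual K H) (h : ∀ ζ : Module.Dual K H, ωG (a, ξ) (0, ζ) = 0) :
    a = 0 := by
  obtain ⟨a0, ha0, a1, ha1, haeq⟩ := decomp_of_isCompl hcompl a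
  obtain ⟨ξ0, hξ0, ξ1, hξ1, hξeq⟩ := decomp_of_isCompl (dualSub_isCompl hcompl) ξ
  have e1 : ((a, ξ) : H × Module.Dual K H) = (a0, ξ0) + (a1, ξ1) := by
    rw [Prod.mk_add_mk, ← haeq, ← hξeq]
  have key : ∀ b : Bool, ∀ ζ ∈ dualSub K H sub b,
      ωG (a, ξ) (0, ζ) = -(ssign K b false * ζ a0) - ssign K b true * ζ a1 := by
    intro b ζ hζ
    rw [e1, hωGbil.1,
      hωGval false false false b a0 ha0 ξ0 hξ0 0 (zero_mem _) ζ hζ,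
      hωGval true true false b a1 ha1 ξ1 hξ1 0 (zero_mem _) ζ hζ]
    simp only [map_zero, zero_sub]
    ring
  have h0 : a0 = 0 := by
    have hmem : a0 ∈ sub true := by
      rw [← Subspace.forall_mem_dualAnnihilator_apply_eq_zero_iff (sub true) a0]
      intro φ hφ
      have hφ' : φ ∈ dualSub K H sub false := hφ
      have hk := key false φ hφ'
      rw [h φ] at hk
      have hφa1 : φ a1 = 0 := mem_dualSub.mp hφ' a1 ha1
      simp only [ssign_false_left, one_mul, hφa1, mul_zero, sub_zero] at hk
      first
        | linear_combination hk
        | linear_combination -hk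
    exact (Submodule.disjoint_def.mp hcompl.disjoint a0 ha0 hmem)
  have h1 : a1 = 0 := by
    have hmem : a1 ∈ sub false := by
      rw [← Subspace.forall_mem_dualAnnihilator_apply_eq_zero_iff (sub false) a1]
      intro φ hφ
      have hφ' : φ ∈ dualSub K H sub true := hφ
      have hk := key true φ hφ'
      rw [h φ] at hk
      have hφa0 : φ a0 = 0 := mem_dualSub.mp hφ' a0 ha0
      simp only [ssign_false_right, ssign_true_true, one_mul, hφa0, mul_zero] at hk
      first
        | linear_combination hk
        | linear_combination -hk
    exact (Submodule.disjoint_def.mp hcompl.disjoint.symm a1 ha1 hmem)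
  rw [haeq, h0, h1, add_zero]

lemma prodIsCompl {V W : Type*} [AddCommGroup V] [Module K V] [AddCommGroup W] [Module K W]
    {p q : Submodule K V} {p' q' : Submodule K W}
    (h : IsCompl p q) (h' : IsCompl p' q') : IsCompl (p.prod p') (q.prod q') := by
  constructor
  · rw [Submodule.disjoint_def]
    intro x hx hy
    have e1 := Submodule.disjoint_def.mp h.disjoint x.1 hx.1 hy.1
    have e2 := Submodule.disjoint_def.mp h'.disjoint x.2 hx.2 hy.2
    exact Prod.ext e1 e2
  · rw [codisjoint_iff, eq_top_iff]
    rintro ⟨x1, x2⟩ -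
    have hx1 : x1 ∈ p ⊔ q := by rw [h.sup_eq_top]; trivial
    have hx2 : x2 ∈ p' ⊔ q' := by rw [h'.sup_eq_top]; trivial
    obtain ⟨a, ha, b, hb, rfl⟩ := Submodule.mem_sup.mp hx1
    obtain ⟨c, hc, d, hd, rfl⟩ := Submodule.mem_sup.mp hx2
    exact Submodule.mem_sup.mpr ⟨(a, c), ⟨ha, hc⟩, (b, d), ⟨hb, hd⟩, rfl⟩

lemma idealFull
    (hcompl : IsCompl (sub false) (sub true))
    (hbrGbil : IsBilinMap K (H × Module.Dual K H) (H × Module.Dual K H) brG)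
    (hbrG2 : ∀ i j : Bool, ∀ u ∈ sub i, ∀ ξ ∈ dualSub K H sub j,
      brG (u, 0) (0, ξ) = (0, -(ssign K i j) • (ξ.comp (conn u))))
    (hbrG3 : ∀ i j : Bool, ∀ u ∈ sub i, ∀ ξ ∈ dualSub K H sub j,
      brG (0, ξ) (u, 0) = (0, ξ.comp (conn u)))
    (hbrG4 : ∀ ξ ζ : Module.Dual K H, brG (0, ξ) (0, ζ) = 0)
    (g : H × Module.Dual K H)
    (p : H × Module.Dual K H)
    (hp : p ∈ (⊥ : Submodule K H).prod (⊤ : Submodule K (Module.Dual K H))) :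
    brG g p ∈ (⊥ : Submodule K H).prod (⊤ : Submodule K (Module.Dual K H))
      ∧ brG p g ∈ (⊥ : Submodule K H).prod (⊤ : Submodule K (Module.Dual K H)) := by
  have memS : ∀ φ : Module.Dual K H,
      ((0 : H), φ) ∈ (⊥ : Submodule K H).prod (⊤ : Submodule K (Module.Dual K H)) :=
    fun φ => ⟨by simp, trivial⟩
  obtain ⟨pa, ζ⟩ := p
  have hpa : pa = 0 := by simpa using hp.1
  subst hpa
  obtain ⟨u, ξ⟩ := g
  obtain ⟨u0, hu0, u1, hu1, hueq⟩ := decomp_of_isCompl hcompl u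
  obtain ⟨ζ0, hζ0, ζ1, hζ1, hζeq⟩ := decomp_of_isCompl (dualSub_isCompl hcompl) ζ
  have e1 : ((u, ξ) : H × Module.Dual K H) = (u0, 0) + ((u1, 0) + (0, ξ)) := by
    rw [Prod.mk_add_mk, Prod.mk_add_mk]
    simp [hueq]
  have e2 : ((0 : H), ζ) = ((0 : H), ζ0) + ((0 : H), ζ1) := by
    rw [Prod.mk_add_mk, ← hζeq, add_zero]
  constructor
  · rw [e1, e2, hbrGbil.1, hbrGbil.1, hbrGbil.2.2.1, hbrGbil.2.2.1, hbrGbil.2.2.1,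
      hbrG2 false false u0 hu0 ζ0 hζ0, hbrG2 false true u0 hu0 ζ1 hζ1,
      hbrG2 true false u1 hu1 ζ0 hζ0, hbrG2 true true u1 hu1 ζ1 hζ1,
      hbrG4, hbrG4]
    exact add_mem (add_mem (memS _) (memS _))
      (add_mem (add_mem (memS _) (memS _)) (add_mem (zero_mem _) (zero_mem _)))
  · rw [e1, e2, hbrGbil.1, hbrGbil.2.2.1, hbrGbil.2.2.1, hbrGbil.2.2.1, hbrGbil.2.2.1,
      hbrG3 false false u0 hu0 ζ0 hζ0, hbrG3 false true u0 hu0 ζ1 hζ1,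
      hbrG3 true false u1 hu1 ζ0 hζ0, hbrG3 true true u1 hu1 ζ1 hζ1,
      hbrG4, hbrG4]
    exact add_mem (add_mem (memS _) (add_mem (memS _) (zero_mem _)))
      (add_mem (memS _) (add_mem (memS _) (zero_mem _)))

lemma lagDual
    (hcompl : IsCompl (sub false) (sub true))
    (hωGbil : IsBilinMap K (H × Module.Dual K H) K ωG)
    (hωGval : ∀ i i' j j' : Bool, ∀ u ∈ sub i, ∀ ξ ∈ dualSub K H sub i',
      ∀ v ∈ sub j, ∀ ζ ∈ dualSub K H sub j',
      ωG (u, ξ) (v, ζ) = ξ v - ssign K j' i * ζ u)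
    (v : H × Module.Dual K H) :
    v ∈ (⊥ : Submodule K H).prod (⊤ : Submodule K (Module.Dual K H)) ↔
      ∀ w ∈ (⊥ : Submodule K H).prod (⊤ : Submodule K (Module.Dual K H)), ωG v w = 0 := by
  obtain ⟨a, ξ⟩ := v
  constructor
  · intro hv w hw
    have ha : a = 0 := by simpa using hv.1
    obtain ⟨b, ζ⟩ := w
    have hb : b = 0 := by simpa using hw.1
    subst ha; subst hb
    obtain ⟨ξ0, hξ0, ξ1, hξ1, hξeq⟩ := decomp_of_isCompl (dualSub_isCompl hcompl) ξ
    obtain ⟨ζ0, hζ0, ζ1, hζ1, hζeq⟩ := decomp_of_isCompl (dualSub_isCompl hcompl) ζ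
    have e1 : ((0 : H), ξ) = ((0 : H), ξ0) + ((0 : H), ξ1) := by
      rw [Prod.mk_add_mk, ← hξeq, add_zero]
    have e2 : ((0 : H), ζ) = ((0 : H), ζ0) + ((0 : H), ζ1) := by
      rw [Prod.mk_add_mk, ← hζeq, add_zero]
    rw [e1, e2, hωGbil.1, hωGbil.2.2.1, hωGbil.2.2.1,
      omegaDD hωGval false false ξ0 hξ0 ζ0 hζ0, omegaDD hωGval false true ξ0 hξ0 ζ1 hζ1,
      omegaDD hωGval true false ξ1 hξ1 ζ0 hζ0, omegaDD hωGval true true ξ1 hξ1 ζ1 hζ1]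
    ring
  · intro hv
    have ha : a = 0 :=
      fstZero hcompl hωGbil hωGval a ξ (fun ζ => hv (0, ζ) ⟨by simp, trivial⟩)
    exact ⟨by simp [ha], trivial⟩

lemma lagH
    (hcompl : IsCompl (sub false) (sub true))
    (hωGbil : IsBilinMap K (H × Module.Dual K H) K ωG)
    (hωGval : ∀ i i' j j' : Bool, ∀ u ∈ sub i, ∀ ξ ∈ dualSub K H sub i',
      ∀ v ∈ sub j, ∀ ζ ∈ dualSub K H sub j',
      ωG (u, ξ) (v, ζ) = ξ v - ssign K j' i * ζ u)
    (v : H × Module.Dual K H) :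
    v ∈ (⊤ : Submodule K H).prod (⊥ : Submodule K (Module.Dual K H)) ↔
      ∀ w ∈ (⊤ : Submodule K H).prod (⊥ : Submodule K (Module.Dual K H)), ωG v w = 0 := by
  obtain ⟨u, ξ⟩ := v
  constructor
  · intro hv w hw
    have hξ : ξ = 0 := by simpa using hv.2
    obtain ⟨v', ζ⟩ := w
    have hζ : ζ = 0 := by simpa using hw.2
    subst hξ; subst hζ
    obtain ⟨u0, hu0, u1, hu1, hueq⟩ := decomp_of_isCompl hcompl u
    obtain ⟨v0, hv0, v1, hv1, hveq⟩ := decomp_of_isCompl hcompl v'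
    have e1 : ((u, (0 : Module.Dual K H))) = (u0, (0 : Module.Dual K H)) + (u1, 0) := by
      rw [Prod.mk_add_mk, ← hueq, add_zero]
    have e2 : ((v', (0 : Module.Dual K H))) = (v0, (0 : Module.Dual K H)) + (v1, 0) := by
      rw [Prod.mk_add_mk, ← hveq, add_zero]
    rw [e1, e2, hωGbil.1, hωGbil.2.2.1, hωGbil.2.2.1,
      hωGval false false false false u0 hu0 0 (zero_mem _) v0 hv0 0 (zero_mem _),
      hωGval false false true false u0 hu0 0 (zero_mem _) v1 hv1 0 (zero_mem _),
      hωGval true true false false u1 hu1 0 (zero_mem _) v0 hv0 0 (zero_mem _),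
      hωGval true true true false u1 hu1 0 (zero_mem _) v1 hv1 0 (zero_mem _)]
    simp
  · intro hv
    have hξ : ξ = 0 :=
      sndZero hcompl hωGbil hωGval u ξ (fun v' => hv (v', 0) ⟨trivial, by simp⟩)
    exact ⟨trivial, by simp [hξ]⟩

end Main

/-- For a finite-dimensional flat Lie superalgebra `(𝔥, ∇)` and an even
super anti-symmetric 2-cocycle `α : 𝔥 × 𝔥 → 𝔥*` for the dual representation that also
satisfies the cyclic condition, the `T*`-extension `𝔤 = 𝔥 ⊕ 𝔥*` is a Lie superalgebra,
the even form `ω(u+ξ, v+ζ) = ξ(v) − (−1)^{p(ζ)p(u)} ζ(u)` is closed, anti-symmetric and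
non-degenerate (so `(𝔤, ω)` is an orthosymplectic quasi-Frobenius Lie superalgebra),
and `𝔥*` is a Lagrangian ideal with `𝔥` a complementary Lagrangian subspace: `(𝔤, ω)`
is strongly polarized by `(𝔥*, 𝔥)`. -/
theorem tstar_extension_stronglyPolarized
    (K H : Type*) [Field K] [AddCommGroup H] [Module K H] [FiniteDimensional K H]
    (hchar : ringChar K ≠ 2)
    (sub : Bool → Submodule K H) (br : H → H → H)
    (hLie : IsLieSuperAlg K H sub br)
    (conn : H →ₗ[K] H →ₗ[K] H)
    (hgr : ∀ i j : Bool, ∀ u ∈ sub i, ∀ v ∈ sub j, conn u v ∈ sub (Bool.xor i j))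
    (hTF : ∀ i j : Bool, ∀ u ∈ sub i, ∀ v ∈ sub j,
      conn u v - ssign K i j • conn v u = br u v)
    (hFlat : ∀ i j : Bool, ∀ u ∈ sub i, ∀ v ∈ sub j, ∀ w : H,
      conn u (conn v w) - ssign K i j • conn v (conn u w) = conn (br u v) w)
    (α : H → H → Module.Dual K H)
    (hαbil : IsBilinMap K H (Module.Dual K H) α)
    (hαeven : ∀ i j : Bool, ∀ u ∈ sub i, ∀ v ∈ sub j,
      α u v ∈ dualSub K H sub (Bool.xor i j))
    (hαskew : ∀ i j : Bool, ∀ u ∈ sub i, ∀ v ∈ sub j, α v u = -(ssign K i j • α u v))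
    (hαcoc : ∀ i j k : Bool, ∀ u ∈ sub i, ∀ v ∈ sub j, ∀ w ∈ sub k,
      -(ssign K i (Bool.xor j k)) • ((α v w).comp (conn u))
        - ssign K i j • (-(ssign K j (Bool.xor i k)) • ((α u w).comp (conn v)))
        + (ssign K k i * ssign K k j) • (-(ssign K k (Bool.xor i j)) • ((α u v).comp (conn w)))
        - α (br u v) w + ssign K j k • α (br u w) v + α u (br v w) = 0)
    -- the cyclic condition
    (hcyc : ∀ i j k : Bool, ∀ u ∈ sub i, ∀ v ∈ sub j, ∀ w ∈ sub k,
      ssign K i k * α u v w + ssign K k j * α w u v + ssign K j i * α v w u = 0)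
    -- the bracket of the T*-extension 𝔤 = 𝔥 ⊕ 𝔥*
    (brG : H × Module.Dual K H → H × Module.Dual K H → H × Module.Dual K H)
    (hbrGbil : IsBilinMap K (H × Module.Dual K H) (H × Module.Dual K H) brG)
    (hbrG1 : ∀ u v : H, brG (u, 0) (v, 0) = (br u v, α u v))
    (hbrG2 : ∀ i j : Bool, ∀ u ∈ sub i, ∀ ξ ∈ dualSub K H sub j,
      brG (u, 0) (0, ξ) = (0, -(ssign K i j) • (ξ.comp (conn u))))
    (hbrG3 : ∀ i j : Bool, ∀ u ∈ sub i, ∀ ξ ∈ dualSub K H sub j,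
      brG (0, ξ) (u, 0) = (0, ξ.comp (conn u)))
    (hbrG4 : ∀ ξ ζ : Module.Dual K H, brG (0, ξ) (0, ζ) = 0)
    -- the even form ω on 𝔤
    (ωG : H × Module.Dual K H → H × Module.Dual K H → K)
    (hωGbil : IsBilinMap K (H × Module.Dual K H) K ωG)
    (hωGval : ∀ i i' j j' : Bool, ∀ u ∈ sub i, ∀ ξ ∈ dualSub K H sub i',
      ∀ v ∈ sub j, ∀ ζ ∈ dualSub K H sub j',
      ωG (u, ξ) (v, ζ) = ξ v - ssign K j' i * ζ u) :
    IsLieSuperAlg K (H × Module.Dual K H)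
        (fun i => (sub i).prod (dualSub K H sub i)) brG
    ∧ IsSuperSkew K (H × Module.Dual K H)
        (fun i => (sub i).prod (dualSub K H sub i)) ωG
    ∧ IsClosedForm K (H × Module.Dual K H)
        (fun i => (sub i).prod (dualSub K H sub i)) brG ωG
    ∧ IsNondegForm K (H × Module.Dual K H) ωG
    ∧ IsEvenForm K (H × Module.Dual K H)
        (fun i => (sub i).prod (dualSub K H sub i)) ωG
    -- 𝔥* = {0} × 𝔥* is an ideal of 𝔤
    ∧ (∀ g : H × Module.Dual K H,
        ∀ p ∈ (⊥ : Submodule K H).prod (⊤ : Submodule K (Module.Dual K H)),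
          brG g p ∈ (⊥ : Submodule K H).prod (⊤ : Submodule K (Module.Dual K H))
          ∧ brG p g ∈ (⊥ : Submodule K H).prod (⊤ : Submodule K (Module.Dual K H)))
    -- 𝔥* is Lagrangian: it equals its own orthogonal
    ∧ (∀ v : H × Module.Dual K H,
        v ∈ (⊥ : Submodule K H).prod (⊤ : Submodule K (Module.Dual K H)) ↔
          ∀ w ∈ (⊥ : Submodule K H).prod (⊤ : Submodule K (Module.Dual K H)), ωG v w = 0)
    -- 𝔥 = 𝔥 × {0} is a complementary Lagrangian subspace
    ∧ IsCompl ((⊥ : Submodule K H).prod (⊤ : Submodule K (Module.Dual K H)))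
        ((⊤ : Submodule K H).prod (⊥ : Submodule K (Module.Dual K H)))
    ∧ (∀ v : H × Module.Dual K H,
        v ∈ (⊤ : Submodule K H).prod (⊥ : Submodule K (Module.Dual K H)) ↔
          ∀ w ∈ (⊤ : Submodule K H).prod (⊥ : Submodule K (Module.Dual K H)), ωG v w = 0) := by
  obtain ⟨hcompl, hbrbil, hgrbr, hbranti, hjac, hjac3⟩ := hLie
  refine ⟨⟨prodIsCompl hcompl (dualSub_isCompl hcompl), hbrGbil,
      gradedFull hgr hgrbr hαeven hbrGbil hbrG1 hbrG2 hbrG3 hbrG4,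
      antiFull hbranti hαskew hbrGbil hbrG1 hbrG2 hbrG3 hbrG4,
      jacFull hbrbil hgr hgrbr hbranti hjac hFlat hαbil hαeven hαskew hαcoc hbrGbil
        hbrG1 hbrG2 hbrG3 hbrG4,
      ?_⟩,
    skewFull hωGval,
    closedFull hgr hgrbr hTF hαeven hcyc hbrGbil hbrG1 hbrG2 hbrG3 hbrG4 hωGbil hωGval,
    ?_,
    evenFull hωGval,
    fun g p hp => idealFull hcompl hbrGbil hbrG2 hbrG3 hbrG4 g p hp,
    lagDual hcompl hωGbil hωGval,
    prodIsCompl isCompl_bot_top isCompl_top_bot,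
    lagH hcompl hωGbil hωGval⟩
  · intro hc f hf
    obtain ⟨u, ξ⟩ := f
    exact jac3Full hcompl hbrbil hgr hgrbr hbranti hTF hFlat hjac3 hαbil hαeven hαskew
      hαcoc hcyc hbrGbil hbrG1 hbrG2 hbrG3 hbrG4 hc u hf.1 ξ hf.2
  · intro x hx
    obtain ⟨u, ξ⟩ := x
    have h2 := sndZero hcompl hωGbil hωGval u ξ (fun v => hx (v, 0))
    have h1 := fstZero hcompl hωGbil hωGval u ξ (fun ζ => hx (0, ζ))
    simp [Prod.ext_iff, h1, h2]
end
end
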